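/- arXiv:2307.04058 — 11 statements merged into one kernel-verified Lean document; each statement's English description precedes it below -/
import Mathlib

section
/- Let A be a real symmetric n×n matrix, B a real n×p matrix, and C a real symmetric p×p matrix. The block matrix Ã = [[A, B], [Bᵀ, C]] (with A and B in the top row and Bᵀ and C in the bottom row) is positive semidefinite if and only if A is positive semidefinite and there exists a real n×p matrix W such that B = A·W and C − Wᵀ·A·W is positive semidefinite. -/
/-!
If `B = A * W`, the block matrix is congruent, through the invertible `[[1, W], [0, 1]]`, to the
block diagonal matrix `diag(A, C - Wᴴ * A * W)`, so it is positive semidefinite iff both blocks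
are. Such a `W` exists as soon as the block matrix is positive semidefinite: for `v ∈ ker A` the
quadratic form vanishes at `(v, 0)`, so `(v, 0)` lies in the kernel of the block matrix and
`Bᴴ * v = 0`. Hence every column of `B` is orthogonal to `ker A`, which for Hermitian `A` is
`range A`.
-/

open Matrix
open scoped ComplexOrder

namespace Matrix

variable {𝕜 m n : Type*} [RCLike 𝕜] [Fintype m]

theorem IsHermitian.exists_mulVec_eq_of_orthogonal_ker {A : Matrix m m 𝕜} (hA : A.IsHermitian)
    {b : m → 𝕜} (hb : ∀ v, A *ᵥ v = 0 → star v ⬝ᵥ b = 0) : ∃ w, A *ᵥ w = b := by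
  classical
  have hrange : WithLp.toLp 2 b ∈ LinearMap.range (toEuclideanLin A) := by
    rw [← Submodule.orthogonal_orthogonal (LinearMap.range _),
      (isSymmetric_toEuclideanLin_iff.mpr hA).orthogonal_range]
    intro u hu
    rw [EuclideanSpace.inner_eq_star_dotProduct, dotProduct_comm]
    exact hb _ (by simpa using congrArg WithLp.ofLp hu)
  obtain ⟨w, hw⟩ := hrange
  exact ⟨WithLp.ofLp w, by simpa using congrArg WithLp.ofLp hw⟩

theorem IsHermitian.exists_eq_mul_of_ker_le {A : Matrix m m 𝕜} (hA : A.IsHermitian)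
    {B : Matrix m n 𝕜} (hB : ∀ v, A *ᵥ v = 0 → Bᴴ *ᵥ v = 0) :
    ∃ W : Matrix m n 𝕜, B = A * W := by
  have hcol (j : n) : ∃ w, A *ᵥ w = Bᵀ j :=
    hA.exists_mulVec_eq_of_orthogonal_ker fun v hv => by
      simpa [mulVec, dotProduct, mul_comm] using congrArg star (congrFun (hB v hv) j)
  choose w hw using hcol
  refine ⟨of fun i j => w j i, Matrix.ext fun i j => ?_⟩
  simpa [mul_apply, mulVec, dotProduct] using (congrFun (hw j) i).symm

variable [Fintype n]

theorem PosSemidef.conjTranspose_mulVec_eq_zero_of_fromBlocks {A : Matrix m m 𝕜}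
    {B : Matrix m n 𝕜} {C : Matrix n n 𝕜} (h : (fromBlocks A B Bᴴ C).PosSemidef) {v : m → 𝕜}
    (hv : A *ᵥ v = 0) : Bᴴ *ᵥ v = 0 := by
  have hker := (h.dotProduct_mulVec_zero_iff (Sum.elim v 0)).mp
    (by simp [fromBlocks_mulVec, Function.star_sumElim, hv])
  ext j
  simpa [fromBlocks_mulVec, hv] using congrFun hker (Sum.inr j)

theorem posSemidef_fromBlocks_zero_zero_iff {A : Matrix m m 𝕜} {D : Matrix n n 𝕜} :
    (fromBlocks A 0 0 D).PosSemidef ↔ A.PosSemidef ∧ D.PosSemidef := by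
  refine ⟨fun h => ⟨h.submatrix Sum.inl, h.submatrix Sum.inr⟩, fun ⟨hA, hD⟩ => ?_⟩
  refine .of_dotProduct_mulVec_nonneg (hA.isHermitian.fromBlocks (by simp) hD.isHermitian)
    fun x => ?_
  rw [← Sum.elim_comp_inl_inr x, fromBlocks_mulVec, Function.star_sumElim,
    sumElim_dotProduct_sumElim]
  simpa using add_nonneg (hA.dotProduct_mulVec_nonneg (x ∘ Sum.inl))
    (hD.dotProduct_mulVec_nonneg (x ∘ Sum.inr))

theorem fromBlocks_mul_eq_star_mul_mul [DecidableEq m] [DecidableEq n] {A : Matrix m m 𝕜}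
    (hA : A.IsHermitian) (W : Matrix m n 𝕜) (C : Matrix n n 𝕜) :
    fromBlocks A (A * W) (A * W)ᴴ C =
      star (fromBlocks 1 W 0 1) * fromBlocks A 0 0 (C - Wᴴ * A * W) * fromBlocks 1 W 0 1 := by
  simp [star_eq_conjTranspose, fromBlocks_conjTranspose, fromBlocks_multiply, hA.eq,
    Matrix.mul_assoc]

theorem posSemidef_fromBlocks_mul_iff [DecidableEq m] [DecidableEq n] {A : Matrix m m 𝕜}
    (hA : A.IsHermitian) (W : Matrix m n 𝕜) (C : Matrix n n 𝕜) :
    (fromBlocks A (A * W) (A * W)ᴴ C).PosSemidef ↔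
      A.PosSemidef ∧ (C - Wᴴ * A * W).PosSemidef := by
  rw [fromBlocks_mul_eq_star_mul_mul hA,
    (isUnit_fromBlocks_zero₂₁.mpr ⟨isUnit_one, isUnit_one⟩).posSemidef_star_left_conjugate_iff,
    posSemidef_fromBlocks_zero_zero_iff]

theorem posSemidef_fromBlocks_iff {A : Matrix m m 𝕜} {B : Matrix m n 𝕜} {C : Matrix n n 𝕜} :
    (fromBlocks A B Bᴴ C).PosSemidef ↔
      A.PosSemidef ∧ ∃ W : Matrix m n 𝕜, B = A * W ∧ (C - Wᴴ * A * W).PosSemidef := by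
  classical
  constructor
  · intro h
    have hA : A.PosSemidef := h.submatrix Sum.inl
    obtain ⟨W, rfl⟩ := hA.isHermitian.exists_eq_mul_of_ker_le fun _ hv =>
      h.conjTranspose_mulVec_eq_zero_of_fromBlocks hv
    exact ⟨hA, W, rfl, ((posSemidef_fromBlocks_mul_iff hA.isHermitian W C).mp h).2⟩
  · rintro ⟨hA, W, rfl, hS⟩
    exact (posSemidef_fromBlocks_mul_iff hA.isHermitian W C).mpr ⟨hA, hS⟩

end Matrix

theorem block_posSemidef_iff_general (n p : ℕ)
    (A : Matrix (Fin n) (Fin n) ℝ) (B : Matrix (Fin n) (Fin p) ℝ)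
    (C : Matrix (Fin p) (Fin p) ℝ) :
    (Matrix.fromBlocks A B Bᵀ C).PosSemidef ↔
      (A.PosSemidef ∧ ∃ W : Matrix (Fin n) (Fin p) ℝ,
        B = A * W ∧ (C - Wᵀ * A * W).PosSemidef) := by
  simpa only [conjTranspose_eq_transpose_of_trivial] using
    posSemidef_fromBlocks_iff (A := A) (B := B) (C := C)

/-- **Smul'jan's theorem (positivity part).** The block matrix
`[[A, B], [Bᵀ, C]]` is positive semidefinite iff `A` is positive semidefinite
and there exists `W` with `B = A * W` and `C - Wᵀ * A * W` positive semidefinite. -/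
theorem block_posSemidef_iff (n p : ℕ)
    (A : Matrix (Fin n) (Fin n) ℝ) (B : Matrix (Fin n) (Fin p) ℝ)
    (C : Matrix (Fin p) (Fin p) ℝ) (hA : A.IsSymm) (hC : C.IsSymm) :
    (Matrix.fromBlocks A B Bᵀ C).PosSemidef ↔
      (A.PosSemidef ∧ ∃ W : Matrix (Fin n) (Fin p) ℝ,
        B = A * W ∧ (C - Wᵀ * A * W).PosSemidef) :=
  block_posSemidef_iff_general n p A B C
end

section
/- Let A be a real symmetric n×n matrix, B a real n×p matrix, and C a real symmetric p×p matrix, and let Ã = [[A, B], [Bᵀ, C]] be the corresponding block matrix. Then rank à = rank A if and only if there exists a real n×p matrix W with A·W = B and C = Wᵀ·A·W. -/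
/-!
Given `W` with `A * W = B`, symmetry of `A` gives `Bᵀ = Wᵀ * A`, and multiplying by unitriangular
block matrices turns `[[A, B], [Bᵀ, C]]` into `[[A, 0], [0, C - Wᵀ * A * W]]`, whose rank is
`rank A + rank (C - Wᵀ * A * W)`. Such a `W` exists once `rank [[A, B], [Bᵀ, C]] = rank A`: then
`rank [A B] = rank A`, so the column space of `[A B]` equals that of `A` and contains the columns
of `B`.
-/

open Matrix Module

theorem Submodule.finrank_prod {K M N : Type*} [Field K] [AddCommGroup M] [Module K M]
    [AddCommGroup N] [Module K N] (s : Submodule K M) (t : Submodule K N)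
    [FiniteDimensional K s] [FiniteDimensional K t] :
    finrank K (s.prod t) = finrank K s + finrank K t := by
  let e : s.prod t ≃ₗ[K] s × t :=
    { toFun := fun x => (⟨x.1.1, x.2.1⟩, ⟨x.1.2, x.2.2⟩)
      invFun := fun y => ⟨(y.1, y.2), y.1.2, y.2.2⟩
      map_add' := fun _ _ => rfl
      map_smul' := fun _ _ => rfl
      left_inv := fun _ => rfl
      right_inv := fun _ => rfl }
  rw [e.finrank_eq, Module.finrank_prod]

namespace Matrix

variable {K : Type*} [Field K] {m n p q : Type*} [Fintype n] [Fintype q]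

theorem rank_eq_zero_iff {A : Matrix m n K} : A.rank = 0 ↔ A = 0 := by
  rw [rank, Submodule.finrank_eq_zero, LinearMap.range_eq_bot]
  refine ⟨fun h => ?_, fun h => by simp [h]⟩
  classical
  ext i j
  simpa using congr_fun (LinearMap.congr_fun h (Pi.single j 1)) i

theorem mulVecLin_fromBlocks_zero_zero (A : Matrix m n K) (D : Matrix p q K) :
    (fromBlocks A 0 0 D).mulVecLin =
      (LinearEquiv.sumArrowLequivProdArrow m p K K).symm.toLinearMap ∘ₗ
        (A.mulVecLin.prodMap D.mulVecLin) ∘ₗ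
          (LinearEquiv.sumArrowLequivProdArrow n q K K).toLinearMap := by
  ext v i
  cases i <;> simp [fromBlocks_mulVec] <;> rfl

theorem rank_fromBlocks_zero_zero (A : Matrix m n K) (D : Matrix p q K) :
    (fromBlocks A 0 0 D).rank = A.rank + D.rank := by
  rw [rank, mulVecLin_fromBlocks_zero_zero, LinearMap.range_comp,
    LinearMap.range_comp_of_range_eq_top _ (LinearEquiv.range _), LinearEquiv.finrank_map_eq,
    LinearMap.range_prodMap, Submodule.finrank_prod, rank, rank]

theorem fromBlocks_eq_mul_fromBlocks_zero_zero_mul [DecidableEq m] [DecidableEq n]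
    [DecidableEq p] [DecidableEq q] [Fintype m] [Fintype p]
    (A : Matrix m n K) (D : Matrix p q K) (V : Matrix p m K) (W : Matrix n q K) :
    fromBlocks A (A * W) (V * A) (V * A * W + D) =
      (fromBlocks 1 0 V 1 : Matrix (m ⊕ p) (m ⊕ p) K) * fromBlocks A 0 0 D *
        (fromBlocks 1 W 0 1 : Matrix (n ⊕ q) (n ⊕ q) K) := by
  simp [fromBlocks_multiply, Matrix.mul_assoc]

theorem rank_fromBlocks_mul_mul_add [Fintype m] [Fintype p]
    (A : Matrix m n K) (D : Matrix p q K) (V : Matrix p m K) (W : Matrix n q K) :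
    (fromBlocks A (A * W) (V * A) (V * A * W + D)).rank = A.rank + D.rank := by
  classical
  rw [fromBlocks_eq_mul_fromBlocks_zero_zero_mul,
    rank_mul_eq_left_of_isUnit_det _ _ (by simp),
    rank_mul_eq_right_of_isUnit_det _ _ (by simp),
    rank_fromBlocks_zero_zero]

theorem range_mulVecLin_submatrix_le {k : Type*} [Fintype k] (M : Matrix m n K) (c : k → n) :
    LinearMap.range (M.submatrix id c).mulVecLin ≤ LinearMap.range M.mulVecLin := by
  rw [range_mulVecLin, range_mulVecLin]
  exact Submodule.span_mono (by rintro _ ⟨j, rfl⟩; exact ⟨c j, rfl⟩)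

theorem exists_mul_eq_of_range_le {A : Matrix m n K} {B : Matrix m q K}
    (h : LinearMap.range B.mulVecLin ≤ LinearMap.range A.mulVecLin) :
    ∃ W : Matrix n q K, A * W = B := by
  classical
  obtain ⟨g, hg⟩ := Module.projective_lifting_property A.mulVecLin.rangeRestrict
    (B.mulVecLin.codRestrict _ fun v => h ⟨v, rfl⟩) A.mulVecLin.surjective_rangeRestrict
  refine ⟨LinearMap.toMatrix' g, Matrix.toLin'.injective ?_⟩
  rw [toLin'_mul, toLin'_toMatrix']
  exact LinearMap.ext fun v => congrArg Subtype.val (LinearMap.congr_fun hg v)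

theorem exists_mul_eq_of_rank_fromCols_eq {A : Matrix m n K} {B : Matrix m q K}
    (h : (fromCols A B).rank = A.rank) : ∃ W : Matrix n q K, A * W = B := by
  have hAF : LinearMap.range A.mulVecLin ≤ LinearMap.range (fromCols A B).mulVecLin :=
    range_mulVecLin_submatrix_le (fromCols A B) Sum.inl
  have hBF : LinearMap.range B.mulVecLin ≤ LinearMap.range (fromCols A B).mulVecLin :=
    range_mulVecLin_submatrix_le (fromCols A B) Sum.inr
  exact exists_mul_eq_of_range_le (hBF.trans (Submodule.eq_of_le_of_finrank_eq hAF h.symm).ge)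

theorem rank_fromCols_le_rank_fromBlocks [Fintype p] (A : Matrix m n K) (B : Matrix m q K)
    (C : Matrix p n K) (D : Matrix p q K) : (fromCols A B).rank ≤ (fromBlocks A B C D).rank :=
  rank_submatrix_le (fromBlocks A B C D) Sum.inl id

theorem rank_le_rank_fromCols (A : Matrix m n K) (B : Matrix m q K) :
    A.rank ≤ (fromCols A B).rank :=
  rank_submatrix_le (fromCols A B) id Sum.inl

end Matrix

theorem block_rank_eq_iff_general (n p : ℕ)
    (A : Matrix (Fin n) (Fin n) ℝ) (B : Matrix (Fin n) (Fin p) ℝ)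
    (C : Matrix (Fin p) (Fin p) ℝ) (hA : A.IsSymm) :
    (Matrix.fromBlocks A B Bᵀ C).rank = A.rank ↔
      ∃ W : Matrix (Fin n) (Fin p) ℝ, A * W = B ∧ C = Wᵀ * A * W := by
  have block_eq (W : Matrix (Fin n) (Fin p) ℝ) (hW : A * W = B) :
      fromBlocks A B Bᵀ C = fromBlocks A (A * W) (Wᵀ * A) (Wᵀ * A * W + (C - Wᵀ * A * W)) := by
    rw [← hW, transpose_mul, hA.eq, add_sub_cancel]
  constructor
  · intro h
    obtain ⟨W, hW⟩ := exists_mul_eq_of_rank_fromCols_eq <| le_antisymm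
      (h ▸ rank_fromCols_le_rank_fromBlocks A B Bᵀ C) (rank_le_rank_fromCols A B)
    rw [block_eq W hW, rank_fromBlocks_mul_mul_add, Nat.add_eq_left, Matrix.rank_eq_zero_iff,
      sub_eq_zero] at h
    exact ⟨W, hW, h⟩
  · rintro ⟨W, hW, rfl⟩
    rw [block_eq W hW, rank_fromBlocks_mul_mul_add, sub_self, rank_zero, add_zero]

/-- **Smul'jan's theorem (flatness part).** For the block matrix
`Ã = [[A, B], [Bᵀ, C]]`, one has `rank Ã = rank A` iff there exists `W`
with `A * W = B` and `C = Wᵀ * A * W`. -/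
theorem block_rank_eq_iff (n p : ℕ)
    (A : Matrix (Fin n) (Fin n) ℝ) (B : Matrix (Fin n) (Fin p) ℝ)
    (C : Matrix (Fin p) (Fin p) ℝ) (hA : A.IsSymm) (hC : C.IsSymm) :
    (Matrix.fromBlocks A B Bᵀ C).rank = A.rank ↔
      ∃ W : Matrix (Fin n) (Fin p) ℝ, A * W = B ∧ C = Wᵀ * A * W :=
  block_rank_eq_iff_general n p A B C hA
end

section
/- Let A be a real symmetric n×n matrix, W a real n×p matrix, and C a real symmetric p×p matrix. Then the rank of the block matrix [[A, A·W], [Wᵀ·A, C]] equals rank A + rank (C − Wᵀ·A·W). -/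
open Matrix

private def prodEquivAux {R M N : Type*} [Ring R] [AddCommGroup M] [AddCommGroup N]
    [Module R M] [Module R N] (S : Submodule R M) (T : Submodule R N) :
    (S.prod T) ≃ₗ[R] S × T where
  toFun x := (⟨x.1.1, x.2.1⟩, ⟨x.1.2, x.2.2⟩)
  invFun x := ⟨(x.1.1, x.2.1), ⟨x.1.2, x.2.2⟩⟩
  map_add' := by intros; rfl
  map_smul' := by intros; rfl
  left_inv := fun _ => rfl
  right_inv := fun _ => rfl

private lemma range_prodMap {R M N M' N' : Type*} [Ring R] [AddCommGroup M] [AddCommGroup N]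
    [AddCommGroup M'] [AddCommGroup N'] [Module R M] [Module R N] [Module R M'] [Module R N']
    (f : M →ₗ[R] M') (g : N →ₗ[R] N') :
    LinearMap.range (f.prodMap g) = (LinearMap.range f).prod (LinearMap.range g) := by
  ext ⟨x, y⟩
  constructor
  · rintro ⟨⟨a, b⟩, h⟩
    exact ⟨⟨a, congrArg Prod.fst h⟩, ⟨b, congrArg Prod.snd h⟩⟩
  · rintro ⟨⟨a, ha⟩, ⟨b, hb⟩⟩
    exact ⟨(a, b), by simp [ha, hb]⟩

private lemma rank_fromBlocks_diag (n p : ℕ)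
    (A : Matrix (Fin n) (Fin n) ℝ) (D : Matrix (Fin p) (Fin p) ℝ) :
    (Matrix.fromBlocks A 0 0 D).rank = A.rank + D.rank := by
  classical
  set e := LinearEquiv.sumArrowLequivProdArrow (Fin n) (Fin p) ℝ ℝ
  have key : (Matrix.fromBlocks A 0 0 D).mulVecLin =
      e.symm.toLinearMap ∘ₗ (A.mulVecLin.prodMap D.mulVecLin) ∘ₗ e.toLinearMap := by
    apply LinearMap.ext
    intro v
    have hv : v = Sum.elim (v ∘ Sum.inl) (v ∘ Sum.inr) := by
      ext (i | i) <;> rfl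
    funext i
    cases i with
    | inl i =>
      rw [LinearMap.comp_apply, LinearMap.comp_apply]
      conv_lhs => rw [mulVecLin_apply, hv, Matrix.fromBlocks_mulVec]
      simp [e, LinearEquiv.sumArrowLequivProdArrow]
      rfl
    | inr i =>
      rw [LinearMap.comp_apply, LinearMap.comp_apply]
      conv_lhs => rw [mulVecLin_apply, hv, Matrix.fromBlocks_mulVec]
      simp [e, LinearEquiv.sumArrowLequivProdArrow]
      rfl
  rw [Matrix.rank, key, LinearMap.range_comp, LinearMap.range_comp,
    LinearEquiv.range, Submodule.map_top, range_prodMap]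
  rw [LinearEquiv.finrank_map_eq]
  rw [LinearEquiv.finrank_eq (prodEquivAux _ _), Module.finrank_prod]
  rfl

private lemma rank_congr (n p : ℕ) (M : Matrix (Fin (n + p)) (Fin (n + p)) ℝ)
    (P : Matrix (Fin (n + p)) (Fin (n + p)) ℝ) (hP : IsUnit P.det) :
    (Pᵀ * M * P).rank = M.rank := by
  rw [Matrix.rank_mul_eq_left_of_isUnit_det P _ hP,
    Matrix.rank_mul_eq_right_of_isUnit_det Pᵀ _ (by simpa using hP)]

/-- The rank of the block matrix `[[A, A·W], [Wᵀ·A, C]]` equals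
`rank A + rank (C − Wᵀ·A·W)`. -/
theorem block_rank_add (n p : ℕ)
    (A : Matrix (Fin n) (Fin n) ℝ) (hA : A.IsSymm)
    (W : Matrix (Fin n) (Fin p) ℝ)
    (C : Matrix (Fin p) (Fin p) ℝ) (hC : C.IsSymm) :
    (Matrix.fromBlocks A (A * W) (Wᵀ * A) C).rank = A.rank + (C - Wᵀ * A * W).rank := by
  classical
  set P : Matrix (Fin n ⊕ Fin p) (Fin n ⊕ Fin p) ℝ := Matrix.fromBlocks 1 W 0 1 with hPdef
  have hPdet : IsUnit P.det := by
    rw [hPdef, Matrix.det_fromBlocks_zero₂₁]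
    simp
  have hfactor : Matrix.fromBlocks A (A * W) (Wᵀ * A) C =
      Pᵀ * Matrix.fromBlocks A 0 0 (C - Wᵀ * A * W) * P := by
    rw [hPdef, Matrix.fromBlocks_transpose, Matrix.fromBlocks_multiply,
      Matrix.fromBlocks_multiply]
    simp only [Matrix.transpose_one, Matrix.transpose_zero, Matrix.mul_one, Matrix.one_mul,
      Matrix.mul_zero, Matrix.zero_mul, add_zero, zero_add, Matrix.mul_assoc]
    simp
  rw [hfactor]
  rw [Matrix.rank_mul_eq_left_of_isUnit_det P _ hPdet,
    Matrix.rank_mul_eq_right_of_isUnit_det Pᵀ _ (by simpa using hPdet)]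
  exact rank_fromBlocks_diag n p A (C - Wᵀ * A * W)
end

section
/- Suppose M1 is positive semidefinite and W is a 3×3 real matrix with M1·W = B2, with S = Wᵀ·M1·W = [[x, a, b], [a, y, t], [b, t, z]]. Then the following are equivalent: (i) there exist real numbers β40, β31, β22, β13, β04 such that the associated quartic Hankel block C satisfies C − S is positive semidefinite and rank(C − S) = 0; (ii) y = b. -/
open Matrix

/-- The moment matrix `M(1)` of a cubic moment sequence. -/
def M1 (β00 β10 β01 β20 β11 β02 : ℝ) : Matrix (Fin 3) (Fin 3) ℝ :=
  !![β00, β10, β01; β10, β20, β11; β01, β11, β02]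

/-- The block `B(2)` of a cubic moment sequence. -/
def B2 (β20 β11 β02 β30 β21 β12 β03 : ℝ) : Matrix (Fin 3) (Fin 3) ℝ :=
  !![β20, β11, β02; β30, β21, β12; β21, β12, β03]

/-- The quartic Hankel block `C(2)`. -/
def C2 (β40 β31 β22 β13 β04 : ℝ) : Matrix (Fin 3) (Fin 3) ℝ :=
  !![β40, β31, β22; β31, β22, β13; β22, β13, β04]

lemma rank_zero_eq_zero {n : ℕ} (A : Matrix (Fin n) (Fin n) ℝ)
    (h : A.rank = 0) : A = 0 := by
  rw [Matrix.rank, Submodule.finrank_eq_zero] at h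
  ext i j
  have : A.mulVec (Pi.single j 1) = 0 := by
    have hmem : A.mulVec (Pi.single j 1) ∈ LinearMap.range A.mulVecLin :=
      ⟨Pi.single j 1, rfl⟩
    rw [h] at hmem
    simpa using hmem
  have := congrFun this i
  simpa [Matrix.mulVec_single] using this

/-- Lemma 3.1: there exist quartic moments with `C − WᵀM1W ⪰ 0` and
`rank (C − WᵀM1W) = 0` iff `y = b`. -/
theorem cubic_rank_zero_iff (β00 β10 β01 β20 β11 β02 β30 β21 β12 β03 : ℝ)
    (hβ00 : 0 < β00) (x a b y t z : ℝ)
    (W : Matrix (Fin 3) (Fin 3) ℝ)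
    (hpsd : (M1 β00 β10 β01 β20 β11 β02).PosSemidef)
    (hW : M1 β00 β10 β01 β20 β11 β02 * W = B2 β20 β11 β02 β30 β21 β12 β03)
    (hS : Wᵀ * M1 β00 β10 β01 β20 β11 β02 * W = !![x, a, b; a, y, t; b, t, z]) :
    (∃ β40 β31 β22 β13 β04 : ℝ,
        (C2 β40 β31 β22 β13 β04 - !![x, a, b; a, y, t; b, t, z]).PosSemidef ∧
        (C2 β40 β31 β22 β13 β04 - !![x, a, b; a, y, t; b, t, z]).rank = 0) ↔
      y = b := by
  constructor
  · rintro ⟨β40, β31, β22, β13, β04, hpsd', hrank⟩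
    have hrank := rank_zero_eq_zero _ hrank
    have h11 := congrFun (congrFun hrank 1) 1
    have h02 := congrFun (congrFun hrank 0) 2
    simp [C2, Matrix.sub_apply] at h11 h02
    linarith
  · intro hyb
    refine ⟨x, a, y, t, z, ?_, ?_⟩
    · have : C2 x a y t z - !![x, a, b; a, y, t; b, t, z] = 0 := by
        subst hyb
        ext i j
        fin_cases i <;> fin_cases j <;> simp [C2]
      rw [this]
      exact Matrix.PosSemidef.zero
    · have : C2 x a y t z - !![x, a, b; a, y, t; b, t, z] = 0 := by
        subst hyb
        ext i j
        fin_cases i <;> fin_cases j <;> simp [C2]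
      rw [this]
      exact Matrix.rank_zero
end

section
/- Suppose M1 is positive semidefinite with rank M1 = 1 or rank M1 = 2, and W is a 3×3 real matrix with M1·W = B2. Then in S = Wᵀ·M1·W = [[x, a, b], [a, y, t], [b, t, z]] one has y = b, i.e., the (2,2) entry of S equals its (1,3) entry. -/
open Matrix

/-- Proposition 3.4: if `M(1) ⪰ 0` with `rank M(1) = 1` or `2` and
`M1·W = B2`, then in `S = WᵀM1W = [[x,a,b],[a,y,t],[b,t,z]]` one has `y = b`. -/
theorem cubic_low_rank_y_eq_b
    (β00 β10 β01 β20 β11 β02 β30 β21 β12 β03 : ℝ) (hβ00 : 0 < β00)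
    (x a b y t z : ℝ) (W : Matrix (Fin 3) (Fin 3) ℝ)
    (hpsd : (M1 β00 β10 β01 β20 β11 β02).PosSemidef)
    (hrank : (M1 β00 β10 β01 β20 β11 β02).rank = 1 ∨
             (M1 β00 β10 β01 β20 β11 β02).rank = 2)
    (hW : M1 β00 β10 β01 β20 β11 β02 * W = B2 β20 β11 β02 β30 β21 β12 β03)
    (hS : Wᵀ * M1 β00 β10 β01 β20 β11 β02 * W = !![x, a, b; a, y, t; b, t, z]) :
    y = b := by
  -- determinant is zero since rank < 3
  have hdet : (M1 β00 β10 β01 β20 β11 β02).det = 0 := by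
    by_contra h
    have hu : IsUnit (M1 β00 β10 β01 β20 β11 β02) :=
      (Matrix.isUnit_iff_isUnit_det _).mpr (isUnit_iff_ne_zero.mpr h)
    have := Matrix.rank_of_isUnit _ hu
    simp [Fintype.card_fin] at this
    rcases hrank with h1 | h1 <;> omega
  obtain ⟨v, hv0, hv⟩ := (Matrix.exists_mulVec_eq_zero_iff).mpr hdet
  set p := v 0 with hp
  set q := v 1 with hq
  set r := v 2 with hr
  -- kernel equations
  have K1 : p * β00 + q * β10 + r * β01 = 0 := by
    have := congrFun hv 0
    simpa [M1, Matrix.mulVec, dotProduct, Fin.sum_univ_three, mul_comm] using this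
  have K2 : p * β10 + q * β20 + r * β11 = 0 := by
    have := congrFun hv 1
    simpa [M1, Matrix.mulVec, dotProduct, Fin.sum_univ_three, mul_comm] using this
  have K3 : p * β01 + q * β11 + r * β02 = 0 := by
    have := congrFun hv 2
    simpa [M1, Matrix.mulVec, dotProduct, Fin.sum_univ_three, mul_comm] using this
  -- entries of M1 * W = B2
  have H := fun i j => congrFun (congrFun hW i) j
  have H11 : β10 * W 0 1 + β20 * W 1 1 + β11 * W 2 1 = β21 := by
    simpa [M1, B2, Matrix.mul_apply, Fin.sum_univ_three] using H 1 1
  have H12 : β10 * W 0 2 + β20 * W 1 2 + β11 * W 2 2 = β12 := by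
    simpa [M1, B2, Matrix.mul_apply, Fin.sum_univ_three] using H 1 2
  have H20 : β01 * W 0 0 + β11 * W 1 0 + β02 * W 2 0 = β21 := by
    simpa [M1, B2, Matrix.mul_apply, Fin.sum_univ_three] using H 2 0
  have H21 : β01 * W 0 1 + β11 * W 1 1 + β02 * W 2 1 = β12 := by
    simpa [M1, B2, Matrix.mul_apply, Fin.sum_univ_three] using H 2 1
  -- further kernel consequences
  have K4 : p * β20 + q * β30 + r * β21 = 0 := by
    have H00 : β00 * W 0 0 + β10 * W 1 0 + β01 * W 2 0 = β20 := by
      simpa [M1, B2, Matrix.mul_apply, Fin.sum_univ_three] using H 0 0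
    have H10 : β10 * W 0 0 + β20 * W 1 0 + β11 * W 2 0 = β30 := by
      simpa [M1, B2, Matrix.mul_apply, Fin.sum_univ_three] using H 1 0
    linear_combination W 0 0 * K1 + W 1 0 * K2 + W 2 0 * K3 - p * H00 - q * H10 - r * H20
  have K5 : p * β11 + q * β21 + r * β12 = 0 := by
    have H01 : β00 * W 0 1 + β10 * W 1 1 + β01 * W 2 1 = β11 := by
      simpa [M1, B2, Matrix.mul_apply, Fin.sum_univ_three] using H 0 1
    linear_combination W 0 1 * K1 + W 1 1 * K2 + W 2 1 * K3 - p * H01 - q * H11 - r * H21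
  have K6 : p * β02 + q * β12 + r * β03 = 0 := by
    have H02 : β00 * W 0 2 + β10 * W 1 2 + β01 * W 2 2 = β02 := by
      simpa [M1, B2, Matrix.mul_apply, Fin.sum_univ_three] using H 0 2
    have H22 : β01 * W 0 2 + β11 * W 1 2 + β02 * W 2 2 = β03 := by
      simpa [M1, B2, Matrix.mul_apply, Fin.sum_univ_three] using H 2 2
    linear_combination W 0 2 * K1 + W 1 2 * K2 + W 2 2 * K3 - p * H02 - q * H12 - r * H22
  -- entries of S = Wᵀ * B2
  have hS2 : Wᵀ * B2 β20 β11 β02 β30 β21 β12 β03 = !![x, a, b; a, y, t; b, t, z] := by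
    rw [← hW, ← Matrix.mul_assoc]; exact hS
  have S := fun i j => congrFun (congrFun hS2 i) j
  have Sy : W 0 1 * β11 + W 1 1 * β21 + W 2 1 * β12 = y := by
    simpa [B2, Matrix.mul_apply, Matrix.transpose_apply, Fin.sum_univ_three] using S 1 1
  have Sb1 : W 0 0 * β02 + W 1 0 * β12 + W 2 0 * β03 = b := by
    simpa [B2, Matrix.mul_apply, Matrix.transpose_apply, Fin.sum_univ_three] using S 0 2
  have Sb2 : W 0 2 * β20 + W 1 2 * β30 + W 2 2 * β21 = b := by
    simpa [B2, Matrix.mul_apply, Matrix.transpose_apply, Fin.sum_univ_three] using S 2 0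
  have Sa1 : W 0 0 * β11 + W 1 0 * β21 + W 2 0 * β12 = a := by
    simpa [B2, Matrix.mul_apply, Matrix.transpose_apply, Fin.sum_univ_three] using S 0 1
  have Sa2 : W 0 1 * β20 + W 1 1 * β30 + W 2 1 * β21 = a := by
    simpa [B2, Matrix.mul_apply, Matrix.transpose_apply, Fin.sum_univ_three] using S 1 0
  have St1 : W 0 1 * β02 + W 1 1 * β12 + W 2 1 * β03 = t := by
    simpa [B2, Matrix.mul_apply, Matrix.transpose_apply, Fin.sum_univ_three] using S 1 2
  have St2 : W 0 2 * β11 + W 1 2 * β21 + W 2 2 * β12 = t := by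
    simpa [B2, Matrix.mul_apply, Matrix.transpose_apply, Fin.sum_univ_three] using S 2 1
  -- q ≠ 0 or r ≠ 0
  have hqr : q ^ 2 + r ^ 2 ≠ 0 := by
    intro h
    have h2 := (add_eq_zero_iff_of_nonneg (sq_nonneg q) (sq_nonneg r)).mp h
    have hq0 : q = 0 := pow_eq_zero_iff two_ne_zero |>.mp h2.1
    have hr0 : r = 0 := pow_eq_zero_iff two_ne_zero |>.mp h2.2
    have hp0 : p = 0 := by
      have : p * β00 = 0 := by linear_combination K1 - β10 * hq0 - β01 * hr0
      exact (mul_eq_zero.mp this).resolve_right (ne_of_gt hβ00)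
    apply hv0
    funext i
    fin_cases i
    · exact hp0
    · exact hq0
    · exact hr0
  have hqy : q * y - q * b = 0 := by
    linear_combination (W 0 1) * K3 + (W 1 1) * K5 + (W 2 1) * K6 - p * H21 - r * St1 -
      q * Sy - (W 0 2) * K2 - (W 1 2) * K4 - (W 2 2) * K5 + p * H12 + r * St2 + q * Sb2
  have hry : r * y - r * b = 0 := by
    linear_combination (W 0 1) * K2 + (W 1 1) * K4 + (W 2 1) * K5 - p * H11 - q * Sa2 -
      r * Sy - (W 0 0) * K3 - (W 1 0) * K5 - (W 2 0) * K6 + p * H20 + q * Sa1 + r * Sb1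
  have key : (q ^ 2 + r ^ 2) * (y - b) = 0 := by
    linear_combination q * hqy + r * hry
  have := mul_eq_zero.mp key
  rcases this with h | h
  · exact absurd h hqr
  · linarith [h]
end

section
/- Suppose M1 is positive semidefinite with rank M1 = 1 or rank M1 = 2, and there exists a 3×3 real matrix W with M1·W = B2. Then, with r = rank M1, the sequence β^{(3)} admits an r-atomic representing measure, and it is unique among r-atomic representing measures: any two r-atomic representing measures of β^{(3)} have the same set of atom–weight pairs {((x_k, y_k), ρ_k) : 1 ≤ k ≤ r}. -/
/-!
Uniqueness holds for any two families of at most two weighted atoms whose moments of degree at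
most `3` agree: given an atom `q` of one family, a product of affine functions vanishing at all
the other atoms of both families has degree at most `3` but does not vanish at `q`, and
integrating it against both families shows that `q` is an atom of the other one, with the same
weight.

For existence, a vector `u` in the kernel of `M(1)` satisfies `uᵀ B(2) = (M(1) u)ᵀ W = 0`, as
`M(1)` is symmetric. Together these say that the moments satisfy the recurrence of the line
`u₀ + u₁ x + u₂ y = 0`, so a measure on that line represents `β` as soon as its projection to
one axis represents the moments `β i 0`. In rank `1` the kernel gives two such lines, meeting at
the single atom. In rank `2` the kernel is one-dimensional, so positive semidefiniteness forces
the `2 × 2` Hankel minor of the projected moments to be positive, and the two atoms of the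
projection are the roots of the quadratic recurrence satisfied by its moments.
-/

open Matrix

/-- The cubic moment sequence `β^{(3)}` as a function of the indices `(i, j)`,
`i + j ≤ 3`. -/
def cubicMoment (β00 β10 β01 β20 β11 β02 β30 β21 β12 β03 : ℝ) : ℕ → ℕ → ℝ
  | 0, 0 => β00
  | 1, 0 => β10
  | 0, 1 => β01
  | 2, 0 => β20
  | 1, 1 => β11
  | 0, 2 => β02
  | 3, 0 => β30
  | 2, 1 => β21
  | 1, 2 => β12
  | 0, 3 => β03
  | _, _ => 0

/-- `pt, ρ` is an `r`-atomic representing measure of the cubic sequence `β^{(3)}`. -/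
def IsAtomicRep (β00 β10 β01 β20 β11 β02 β30 β21 β12 β03 : ℝ) (r : ℕ)
    (pt : Fin r → ℝ × ℝ) (ρ : Fin r → ℝ) : Prop :=
  Function.Injective pt ∧ (∀ k, 0 < ρ k) ∧
    ∀ i j : ℕ, i + j ≤ 3 →
      cubicMoment β00 β10 β01 β20 β11 β02 β30 β21 β12 β03 i j =
        ∑ k, ρ k * (pt k).1 ^ i * (pt k).2 ^ j

open MvPolynomial Function

theorem sum_mul_eval_eq_sum_coeff_mul_moment {ι : Type*} [Fintype ι] (pt : ι → ℝ × ℝ) (ρ : ι → ℝ)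
    (P : MvPolynomial (Fin 2) ℝ) :
    ∑ k, ρ k * eval ![(pt k).1, (pt k).2] P =
      ∑ m ∈ P.support, coeff m P * ∑ k, ρ k * (pt k).1 ^ m 0 * (pt k).2 ^ m 1 := by
  simp only [eval_eq', Fin.prod_univ_two, cons_val_zero, cons_val_one,
    Finset.mul_sum]
  rw [Finset.sum_comm]
  exact Finset.sum_congr rfl fun _ _ => Finset.sum_congr rfl fun _ _ => by ring

theorem sum_mul_eval_eq_of_moments_eq {ι κ : Type*} [Fintype ι] [Fintype κ]
    {pt : ι → ℝ × ℝ} {ρ : ι → ℝ} {pt' : κ → ℝ × ℝ} {ρ' : κ → ℝ} {d : ℕ}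
    (h : ∀ i j, i + j ≤ d →
      ∑ k, ρ k * (pt k).1 ^ i * (pt k).2 ^ j = ∑ k, ρ' k * (pt' k).1 ^ i * (pt' k).2 ^ j)
    {P : MvPolynomial (Fin 2) ℝ} (hP : P.totalDegree ≤ d) :
    ∑ k, ρ k * eval ![(pt k).1, (pt k).2] P = ∑ k, ρ' k * eval ![(pt' k).1, (pt' k).2] P := by
  rw [sum_mul_eval_eq_sum_coeff_mul_moment, sum_mul_eval_eq_sum_coeff_mul_moment]
  refine Finset.sum_congr rfl fun m hm => congrArg _ (h _ _ ?_)
  have := le_totalDegree hm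
  rw [Finsupp.sum_fintype _ _ (by simp), Fin.sum_univ_two] at this
  omega

theorem exists_totalDegree_le_card_eval_eq_zero (S : Finset (ℝ × ℝ)) {q : ℝ × ℝ} (hq : q ∉ S) :
    ∃ P : MvPolynomial (Fin 2) ℝ, P.totalDegree ≤ S.card ∧
      (∀ s ∈ S, eval ![s.1, s.2] P = 0) ∧ eval ![q.1, q.2] P ≠ 0 := by
  -- the affine function `z ↦ ⟪q - s, z - s⟫` vanishes at `s` but not at `q`
  let ℓ : ℝ × ℝ → MvPolynomial (Fin 2) ℝ := fun s =>
    C (q.1 - s.1) * (X 0 - C s.1) + C (q.2 - s.2) * (X 1 - C s.2)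
  have hℓ : ∀ s, (ℓ s).totalDegree ≤ 1 := fun s => by
    refine (totalDegree_add _ _).trans (max_le ?_ ?_) <;>
    refine (totalDegree_mul _ _).trans ?_ <;>
    rw [totalDegree_C, zero_add] <;>
    refine (totalDegree_sub _ _).trans (max_le (totalDegree_X _).le ?_) <;> simp
  have heval : ∀ s z : ℝ × ℝ,
      eval ![z.1, z.2] (ℓ s) = (q.1 - s.1) * (z.1 - s.1) + (q.2 - s.2) * (z.2 - s.2) :=
    fun s z => by simp [ℓ]
  refine ⟨∏ s ∈ S, ℓ s, ?_, fun s hs => ?_, ?_⟩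
  · refine (totalDegree_finsetProd _ _).trans ?_
    simpa using Finset.sum_le_sum fun s _ => hℓ s
  · rw [map_prod]
    exact Finset.prod_eq_zero hs (by rw [heval]; ring)
  · rw [map_prod, Finset.prod_ne_zero_iff]
    intro s hs h
    rw [heval] at h
    have h1 : q.1 = s.1 := by nlinarith [sq_nonneg (q.1 - s.1), sq_nonneg (q.2 - s.2)]
    have h2 : q.2 = s.2 := by nlinarith [sq_nonneg (q.1 - s.1), sq_nonneg (q.2 - s.2)]
    exact hq (Prod.ext h1 h2 ▸ hs)

theorem range_subset_range_of_moments_eq {ι κ : Type*} [Fintype ι] [Fintype κ]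
    {pt : ι → ℝ × ℝ} {ρ : ι → ℝ} {pt' : κ → ℝ × ℝ} {ρ' : κ → ℝ}
    (hpt : Injective pt) (hpt' : Injective pt') (hρ' : ∀ k, ρ' k ≠ 0)
    (h : ∀ i j, i + j < Fintype.card ι + Fintype.card κ →
      ∑ k, ρ k * (pt k).1 ^ i * (pt k).2 ^ j = ∑ k, ρ' k * (pt' k).1 ^ i * (pt' k).2 ^ j) :
    Set.range (fun k => (pt' k, ρ' k)) ⊆ Set.range (fun k => (pt k, ρ k)) := by
  classical
  rintro _ ⟨k', rfl⟩
  set q := pt' k'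
  set S := (Finset.univ.image pt ∪ Finset.univ.image pt').erase q
  have hS : S.card < Fintype.card ι + Fintype.card κ :=
    calc S.card < (Finset.univ.image pt ∪ Finset.univ.image pt').card :=
          Finset.card_erase_lt_of_mem (by simp [q])
      _ ≤ (Finset.univ.image pt).card + (Finset.univ.image pt').card := Finset.card_union_le _ _
      _ ≤ Fintype.card ι + Fintype.card κ := add_le_add Finset.card_image_le Finset.card_image_le
  obtain ⟨P, hPdeg, hPS, hPq⟩ :=
    exists_totalDegree_le_card_eval_eq_zero S (Finset.notMem_erase q _)
  have hzero : ∀ z ∈ Set.range pt ∪ Set.range pt', z ≠ q → eval ![z.1, z.2] P = 0 :=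
    fun z hz hzq => hPS z (Finset.mem_erase.mpr ⟨hzq, by simpa using hz⟩)
  have hsum := sum_mul_eval_eq_of_moments_eq (fun i j hij => h i j (by omega)) hPdeg
  rw [Finset.sum_eq_single k' (fun k _ hk => by
      rw [hzero _ (Or.inr ⟨k, rfl⟩) (hpt'.ne hk), mul_zero]) (by simp)] at hsum
  by_cases hq : q ∈ Set.range pt
  · obtain ⟨k, hk⟩ := hq
    rw [Finset.sum_eq_single k (fun l _ hl => by
        rw [hzero _ (Or.inl ⟨l, rfl⟩) (hk ▸ hpt.ne hl), mul_zero]) (by simp), hk] at hsum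
    exact ⟨k, Prod.ext hk (mul_right_cancel₀ hPq hsum)⟩
  · rw [Finset.sum_eq_zero (fun l _ => by
        rw [hzero _ (Or.inl ⟨l, rfl⟩) (fun h => hq ⟨l, h⟩), mul_zero])] at hsum
    exact absurd hsum.symm (mul_ne_zero (hρ' k') hPq)

theorem range_eq_range_of_moments_eq {ι κ : Type*} [Fintype ι] [Fintype κ]
    {pt : ι → ℝ × ℝ} {ρ : ι → ℝ} {pt' : κ → ℝ × ℝ} {ρ' : κ → ℝ}
    (hpt : Injective pt) (hpt' : Injective pt') (hρ : ∀ k, ρ k ≠ 0) (hρ' : ∀ k, ρ' k ≠ 0)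
    (h : ∀ i j, i + j < Fintype.card ι + Fintype.card κ →
      ∑ k, ρ k * (pt k).1 ^ i * (pt k).2 ^ j = ∑ k, ρ' k * (pt' k).1 ^ i * (pt' k).2 ^ j) :
    Set.range (fun k => (pt k, ρ k)) = Set.range (fun k => (pt' k, ρ' k)) :=
  (range_subset_range_of_moments_eq hpt' hpt hρ fun i j hij => (h i j (by omega)).symm).antisymm
    (range_subset_range_of_moments_eq hpt hpt' hρ' h)

namespace Matrix

variable {m n K : Type*} [Fintype n] [Field K]

theorem range_mulVecLin_eq_span_col_of_rank_eq_one {M : Matrix m n K} (hM : M.rank = 1) {j : n}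
    (hj : M.col j ≠ 0) : LinearMap.range M.mulVecLin = K ∙ M.col j := by
  refine (Submodule.eq_of_le_of_finrank_eq ?_ ?_).symm
  · rw [Submodule.span_singleton_le_iff_mem, range_mulVecLin]
    exact Submodule.subset_span ⟨j, rfl⟩
  · rw [finrank_span_singleton hj, ← hM]
    rfl

theorem rank_add_two_le_of_mulVec_eq_zero {M : Matrix m n K} {u v : n → K}
    (hu : M *ᵥ u = 0) (hv : M *ᵥ v = 0) (huv : LinearIndependent K ![u, v]) :
    M.rank + 2 ≤ Fintype.card n := by
  have hker : Submodule.span K (Set.range ![u, v]) ≤ LinearMap.ker M.mulVecLin := by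
    rw [Submodule.span_le]
    rintro _ ⟨i, rfl⟩
    fin_cases i <;> simpa
  have hker2 := Submodule.finrank_mono hker
  rw [finrank_span_eq_card huv, Fintype.card_fin] at hker2
  have hsum := LinearMap.finrank_range_add_finrank_ker M.mulVecLin
  rw [Module.finrank_fintype_fun_eq_card] at hsum
  change Module.finrank K (LinearMap.range M.mulVecLin) + 2 ≤ _
  omega

theorem PosSemidef.mul_sub_sq_pos_of_mulVec_eq_zero {n : Type*} [Fintype n] [DecidableEq n]
    {M : Matrix n n ℝ} (hM : M.PosSemidef) (hrank : Fintype.card n ≤ M.rank + 1)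
    {u : n → ℝ} (hu : M *ᵥ u = 0) {i j l : n} (hj : u j ≠ 0) (hji : j ≠ i) (hjl : j ≠ l)
    (hil : i ≠ l) (hii : 0 < M i i) : 0 < M i i * M l l - M i l ^ 2 := by
  have hsymm : M l i = M i l := by simpa using hM.isHermitian.apply i l
  set v : n → ℝ := M i l • Pi.single i 1 - M i i • Pi.single l 1
  have hv : star v ⬝ᵥ M *ᵥ v = M i i * (M i i * M l l - M i l ^ 2) := by
    simp only [v, star_trivial, mulVec_sub, mulVec_smul, mulVec_single, MulOpposite.op_one,
      one_smul, dotProduct_sub, dotProduct_smul, sub_dotProduct, smul_dotProduct, single_dotProduct,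
      col_apply, one_mul, smul_eq_mul, hsymm]
    ring
  by_contra hle
  have hMv : M *ᵥ v = 0 := (hM.dotProduct_mulVec_zero_iff v).mp <| le_antisymm
    (hv ▸ mul_nonpos_of_nonneg_of_nonpos hii.le (not_lt.mp hle)) (hM.dotProduct_mulVec_nonneg v)
  have huv : LinearIndependent ℝ ![u, v] := by
    refine LinearIndependent.pair_iff.mpr fun s t hst => ?_
    have hs : s = 0 := by
      simpa [v, hj, hji, hjl] using congrFun hst j
    subst hs
    exact ⟨rfl, by simpa [v, hil, hii.ne'] using congrFun hst l⟩
  have := rank_add_two_le_of_mulVec_eq_zero hu hMv huv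
  omega

end Matrix

theorem exists_lt_hankel_recurrence (m : ℕ → ℝ) (hD : 0 < m 0 * m 2 - m 1 ^ 2) :
    ∃ x₁ x₂ : ℝ, x₁ < x₂ ∧ m 2 = (x₁ + x₂) * m 1 - x₁ * x₂ * m 0 ∧
      m 3 = (x₁ + x₂) * m 2 - x₁ * x₂ * m 1 := by
  obtain ⟨e₁, e₂, hrec₂, hrec₃⟩ :
      ∃ e₁ e₂ : ℝ, m 2 = e₁ * m 1 - e₂ * m 0 ∧ m 3 = e₁ * m 2 - e₂ * m 1 :=
    ⟨(m 0 * m 3 - m 1 * m 2) / (m 0 * m 2 - m 1 ^ 2), (m 1 * m 3 - m 2 ^ 2) / (m 0 * m 2 - m 1 ^ 2),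
      by rw [div_mul_eq_mul_div, div_mul_eq_mul_div, div_sub_div_same, eq_div_iff hD.ne']; ring,
      by field_simp [hD.ne']; ring⟩
  have hdisc : 0 < e₁ ^ 2 - 4 * e₂ := by
    have : m 0 ^ 2 * (e₁ ^ 2 - 4 * e₂) = (m 0 * e₁ - 2 * m 1) ^ 2 + 4 * (m 0 * m 2 - m 1 ^ 2) := by
      linear_combination -4 * m 0 * hrec₂
    nlinarith [sq_nonneg (m 0 * e₁ - 2 * m 1)]
  have hs := Real.sqrt_pos.mpr hdisc
  have hs2 := Real.sq_sqrt hdisc.le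
  refine ⟨(e₁ - √(e₁ ^ 2 - 4 * e₂)) / 2, (e₁ + √(e₁ ^ 2 - 4 * e₂)) / 2, by linarith, ?_, ?_⟩
  · linear_combination hrec₂ - m 0 * hs2 / 4
  · linear_combination hrec₃ - m 1 * hs2 / 4

theorem exists_two_atoms_of_hankel_pos (m : ℕ → ℝ) (hm0 : 0 < m 0)
    (hD : 0 < m 0 * m 2 - m 1 ^ 2) :
    ∃ x w : Fin 2 → ℝ, Injective x ∧ (∀ k, 0 < w k) ∧ ∀ i ≤ 3, m i = ∑ k, w k * x k ^ i := by
  obtain ⟨x₁, x₂, hx, hrec₂, hrec₃⟩ := exists_lt_hankel_recurrence m hD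
  have hx' : 0 < x₂ - x₁ := sub_pos.mpr hx
  -- the two numerators have positive sum `m 0 * (x₂ - x₁)` and positive product
  have hprod : 0 < (m 0 * x₂ - m 1) * (m 1 - m 0 * x₁) := by
    linear_combination hD + m 0 * hrec₂
  have hw₁ : 0 < m 0 * x₂ - m 1 := by
    rcases pos_and_pos_or_neg_and_neg_of_mul_pos hprod with h | h
    · exact h.1
    · nlinarith [mul_pos hm0 hx']
  have hw₂ : 0 < m 1 - m 0 * x₁ := by
    rcases pos_and_pos_or_neg_and_neg_of_mul_pos hprod with h | h
    · exact h.2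
    · nlinarith [mul_pos hm0 hx']
  set w : Fin 2 → ℝ := ![(m 0 * x₂ - m 1) / (x₂ - x₁), (m 1 - m 0 * x₁) / (x₂ - x₁)]
  set S : ℕ → ℝ := fun i => ∑ k, w k * ![x₁, x₂] k ^ i
  have hS₀ : S 0 = m 0 := by
    simp only [S, w, Fin.sum_univ_two, cons_val_zero, cons_val_one, pow_zero, mul_one]
    field_simp
    ring
  have hS₁ : S 1 = m 1 := by
    simp only [S, w, Fin.sum_univ_two, cons_val_zero, cons_val_one, pow_one]
    field_simp
    ring
  have hS : ∀ i, S (i + 2) = (x₁ + x₂) * S (i + 1) - x₁ * x₂ * S i := fun i => by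
    simp only [S, Fin.sum_univ_two, cons_val_zero, cons_val_one]; ring
  refine ⟨![x₁, x₂], w, ?_, ?_, fun i hi => ?_⟩
  · intro a b hab
    fin_cases a <;> fin_cases b <;> simp_all
  · intro k
    fin_cases k
    exacts [div_pos hw₁ hx', div_pos hw₂ hx']
  · change m i = S i
    interval_cases i
    · exact hS₀.symm
    · exact hS₁.symm
    · rw [hS 0, hS₀, hS₁, hrec₂]
    · rw [hS 1, hS 0, hS₀, hS₁, hrec₃, hrec₂]

/-- The functional `x ^ i * y ^ j ↦ f i j` vanishes on the multiples of degree at most `d` of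
`u 0 + u 1 * x + u 2 * y`. -/
def LineRecurrence (u : Fin 3 → ℝ) (d : ℕ) (f : ℕ → ℕ → ℝ) : Prop :=
  ∀ i j, i + j < d → u 0 * f i j + u 1 * f (i + 1) j + u 2 * f i (j + 1) = 0

theorem lineRecurrence_moments {r : ℕ} (u : Fin 3 → ℝ) (d : ℕ) (x y ρ : Fin r → ℝ)
    (hxy : ∀ k, u 0 + u 1 * x k + u 2 * y k = 0) :
    LineRecurrence u d fun i j => ∑ k, ρ k * x k ^ i * y k ^ j := fun i j _ => by
  simp only [Finset.mul_sum, ← Finset.sum_add_distrib]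
  exact Finset.sum_eq_zero fun k _ => by linear_combination ρ k * x k ^ i * y k ^ j * hxy k

theorem LineRecurrence.eq_of_eq_on_axis {f g : ℕ → ℕ → ℝ} {u : Fin 3 → ℝ} {d : ℕ}
    (hf : LineRecurrence u d f) (hg : LineRecurrence u d g) (hu : u 2 ≠ 0)
    (h₀ : ∀ i ≤ d, f i 0 = g i 0) (i j : ℕ) (hij : i + j ≤ d) : f i j = g i j := by
  induction j generalizing i with
  | zero => exact h₀ i hij
  | succ j ih =>
    refine mul_left_cancel₀ hu ?_
    linear_combination hf i j (by omega) - hg i j (by omega) - u 0 * ih i (by omega)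
      - u 1 * ih (i + 1) (by omega)

section CubicMoments

variable {β00 β10 β01 β20 β11 β02 β30 β21 β12 β03 : ℝ}

local notation "β" => cubicMoment β00 β10 β01 β20 β11 β02 β30 β21 β12 β03

theorem IsAtomicRep.range_eq {r : ℕ} (hr : r ≤ 2) {pt pt' : Fin r → ℝ × ℝ} {ρ ρ' : Fin r → ℝ}
    (h : IsAtomicRep β00 β10 β01 β20 β11 β02 β30 β21 β12 β03 r pt ρ)
    (h' : IsAtomicRep β00 β10 β01 β20 β11 β02 β30 β21 β12 β03 r pt' ρ') :
    Set.range (fun k => (pt k, ρ k)) = Set.range (fun k => (pt' k, ρ' k)) := by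
  obtain ⟨hpt, hρ, hmom⟩ := h
  obtain ⟨hpt', hρ', hmom'⟩ := h'
  refine range_eq_range_of_moments_eq hpt hpt' (fun k => (hρ k).ne') (fun k => (hρ' k).ne')
    fun i j hij => ?_
  rw [Fintype.card_fin] at hij
  rw [← hmom i j (by omega), ← hmom' i j (by omega)]

theorem cubicMoment_swap (i j : ℕ) :
    cubicMoment β00 β01 β10 β02 β11 β20 β03 β12 β21 β30 i j = β j i := by
  rcases i with _ | _ | _ | _ | i <;> rcases j with _ | _ | _ | _ | j <;> rfl

theorem IsAtomicRep.of_swap {r : ℕ} {pt : Fin r → ℝ × ℝ} {ρ : Fin r → ℝ}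
    (h : IsAtomicRep β00 β01 β10 β02 β11 β20 β03 β12 β21 β30 r pt ρ) :
    IsAtomicRep β00 β10 β01 β20 β11 β02 β30 β21 β12 β03 r (Prod.swap ∘ pt) ρ := by
  obtain ⟨hpt, hρ, hmom⟩ := h
  refine ⟨Prod.swap_injective.comp hpt, hρ, fun i j hij => ?_⟩
  rw [← cubicMoment_swap, hmom j i (by omega)]
  exact Finset.sum_congr rfl fun k _ => by
    simp only [Function.comp_apply, Prod.fst_swap, Prod.snd_swap]
    ring

theorem M1_transpose : (M1 β00 β10 β01 β20 β11 β02)ᵀ = M1 β00 β10 β01 β20 β11 β02 := by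
  ext i j; fin_cases i <;> fin_cases j <;> rfl

theorem lineRecurrence_cubicMoment {W : Matrix (Fin 3) (Fin 3) ℝ}
    (hW : M1 β00 β10 β01 β20 β11 β02 * W = B2 β20 β11 β02 β30 β21 β12 β03)
    {u : Fin 3 → ℝ} (hu : M1 β00 β10 β01 β20 β11 β02 *ᵥ u = 0) : LineRecurrence u 3 β := by
  have hB : u ᵥ* B2 β20 β11 β02 β30 β21 β12 β03 = 0 := by
    rw [← hW, ← vecMul_vecMul, ← M1_transpose, vecMul_transpose, hu, zero_vecMul]
  have r0 := congrFun hu 0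
  have r1 := congrFun hu 1
  have r2 := congrFun hu 2
  have c0 := congrFun hB 0
  have c1 := congrFun hB 1
  have c2 := congrFun hB 2
  simp only [mulVec, vecMul, dotProduct, Fin.sum_univ_three, M1, B2, of_apply, cons_val',
    cons_val_fin_one, cons_val_zero, cons_val_one, cons_val, Pi.zero_apply] at r0 r1 r2 c0 c1 c2
  intro i j hij
  have hi : i ≤ 2 := by omega
  have hj : j ≤ 2 := by omega
  interval_cases i <;> interval_cases j <;> simp only [cubicMoment] <;> linarith

theorem isAtomicRep_of_mem_line {u : Fin 3 → ℝ} (hu : u 2 ≠ 0) (hrel : LineRecurrence u 3 β)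
    {r : ℕ} {x ρ : Fin r → ℝ} (hx : Injective x) (hρ : ∀ k, 0 < ρ k)
    (hmom : ∀ i ≤ 3, β i 0 = ∑ k, ρ k * x k ^ i) :
    IsAtomicRep β00 β10 β01 β20 β11 β02 β30 β21 β12 β03 r
      (fun k => (x k, -(u 0 + u 1 * x k) / u 2)) ρ := by
  have hy : ∀ k, u 0 + u 1 * x k + u 2 * (-(u 0 + u 1 * x k) / u 2) = 0 := fun k => by
    rw [mul_div_cancel₀ _ hu]
    ring
  exact ⟨fun a b hab => hx (congrArg Prod.fst hab), hρ,
    hrel.eq_of_eq_on_axis (lineRecurrence_moments u 3 x _ ρ hy) hu fun i hi => by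
      simpa using hmom i hi⟩

theorem exists_isAtomicRep_of_rank_eq_one (hβ00 : 0 < β00)
    (hrank : (M1 β00 β10 β01 β20 β11 β02).rank = 1) {W : Matrix (Fin 3) (Fin 3) ℝ}
    (hW : M1 β00 β10 β01 β20 β11 β02 * W = B2 β20 β11 β02 β30 β21 β12 β03) :
    ∃ pt ρ, IsAtomicRep β00 β10 β01 β20 β11 β02 β30 β21 β12 β03 1 pt ρ := by
  set M := M1 β00 β10 β01 β20 β11 β02
  have hrange := range_mulVecLin_eq_span_col_of_rank_eq_one hrank
    (j := 0) fun h => hβ00.ne' (congrFun h 0)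
  have hker : ∀ j, ∃ c : ℝ, M *ᵥ (c • Pi.single 0 1 - Pi.single j 1) = 0 := fun j => by
    obtain ⟨c, hc⟩ := Submodule.mem_span_singleton.mp
      (hrange ▸ LinearMap.mem_range_self M.mulVecLin (Pi.single j 1))
    exact ⟨c, by rw [mulVec_sub, mulVec_smul, mulVec_single_one, hc, mulVecLin_apply,
      sub_self]⟩
  obtain ⟨a, ha⟩ := hker 1
  obtain ⟨b, hb⟩ := hker 2
  have hx : ∀ i ≤ 2, β (i + 1) 0 = a * β i 0 := fun i hi => by
    simpa [← sub_eq_add_neg, sub_eq_zero, eq_comm] using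
      lineRecurrence_cubicMoment hW ha i 0 (by omega)
  have hxmom : ∀ i ≤ 3, β i 0 = β00 * a ^ i := by
    intro i hi
    induction i with
    | zero => simp [cubicMoment]
    | succ i ih => rw [hx i (by omega), ih (by omega)]; ring
  exact ⟨_, _, isAtomicRep_of_mem_line (by simp) (lineRecurrence_cubicMoment hW hb)
    (x := ![a]) (ρ := ![β00]) (injective_of_subsingleton _) (by simp [hβ00])
    (by simpa [mul_comm] using hxmom)⟩

theorem exists_isAtomicRep_two_of_mem_line (hβ00 : 0 < β00) (hD : 0 < β00 * β20 - β10 ^ 2)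
    {u : Fin 3 → ℝ} (hu : u 2 ≠ 0) (hrel : LineRecurrence u 3 β) :
    ∃ pt ρ, IsAtomicRep β00 β10 β01 β20 β11 β02 β30 β21 β12 β03 2 pt ρ := by
  obtain ⟨x, ρ, hx, hρ, hmom⟩ := exists_two_atoms_of_hankel_pos (fun i => β i 0) hβ00 hD
  exact ⟨_, _, isAtomicRep_of_mem_line hu hrel hx hρ hmom⟩

theorem exists_isAtomicRep_of_rank_eq_two (hβ00 : 0 < β00)
    (hpsd : (M1 β00 β10 β01 β20 β11 β02).PosSemidef)
    (hrank : (M1 β00 β10 β01 β20 β11 β02).rank = 2) {W : Matrix (Fin 3) (Fin 3) ℝ}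
    (hW : M1 β00 β10 β01 β20 β11 β02 * W = B2 β20 β11 β02 β30 β21 β12 β03) :
    ∃ pt ρ, IsAtomicRep β00 β10 β01 β20 β11 β02 β30 β21 β12 β03 2 pt ρ := by
  obtain ⟨u, hu0, hu⟩ : ∃ u ≠ 0, M1 β00 β10 β01 β20 β11 β02 *ᵥ u = 0 :=
    exists_mulVec_eq_zero_iff.mpr <| by_contra fun h => by simpa [hrank] using rank_of_det_ne_zero h
  have hrel := lineRecurrence_cubicMoment hW hu
  have hcard : Fintype.card (Fin 3) ≤ (M1 β00 β10 β01 β20 β11 β02).rank + 1 := by simp [hrank]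
  by_cases hu2 : u 2 = 0
  -- the line `u 0 + u 1 * x = 0` is vertical: exchange the roles of `x` and `y`
  · have hu1 : u 1 ≠ 0 := by
      intro hu1
      have h0 := hrel 0 0 (by norm_num)
      simp only [cubicMoment, hu1, hu2, zero_mul, add_zero, mul_eq_zero, hβ00.ne', or_false] at h0
      exact hu0 (funext fun i => by fin_cases i <;> assumption)
    have hD := hpsd.mul_sub_sq_pos_of_mulVec_eq_zero hcard hu (i := 0) (j := 1) (l := 2) hu1
      (by decide) (by decide) (by decide) hβ00
    obtain ⟨pt, ρ, h⟩ : ∃ pt ρ, IsAtomicRep β00 β01 β10 β02 β11 β20 β03 β12 β21 β30 2 pt ρ :=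
      exists_isAtomicRep_two_of_mem_line hβ00 hD (u := ![u 0, u 2, u 1]) hu1 fun i j hij => by
        simp only [cubicMoment_swap, cons_val_zero, cons_val_one, cons_val]
        linear_combination hrel j i (by omega)
    exact ⟨_, _, h.of_swap⟩
  · have hD := hpsd.mul_sub_sq_pos_of_mulVec_eq_zero hcard hu (i := 0) (j := 2) (l := 1) hu2
      (by decide) (by decide) (by decide) hβ00
    exact exists_isAtomicRep_two_of_mem_line hβ00 hD hu2 hrel

end CubicMoments

/-- Theorem 3.5: if `M(1) ⪰ 0` with `rank M(1) = 1` or `2` and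
`Ran B(2) ⊆ Ran M(1)`, then `β^{(3)}` admits a unique `rank M(1)`-atomic
representing measure. -/
theorem cubic_low_rank_unique_measure
    (β00 β10 β01 β20 β11 β02 β30 β21 β12 β03 : ℝ) (hβ00 : 0 < β00)
    (hpsd : (M1 β00 β10 β01 β20 β11 β02).PosSemidef)
    (hrank : (M1 β00 β10 β01 β20 β11 β02).rank = 1 ∨
             (M1 β00 β10 β01 β20 β11 β02).rank = 2)
    (hW : ∃ W : Matrix (Fin 3) (Fin 3) ℝ,
        M1 β00 β10 β01 β20 β11 β02 * W = B2 β20 β11 β02 β30 β21 β12 β03) :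
    (∃ (pt : Fin (M1 β00 β10 β01 β20 β11 β02).rank → ℝ × ℝ)
        (ρ : Fin (M1 β00 β10 β01 β20 β11 β02).rank → ℝ),
        IsAtomicRep β00 β10 β01 β20 β11 β02 β30 β21 β12 β03
          (M1 β00 β10 β01 β20 β11 β02).rank pt ρ) ∧
      ∀ (pt pt' : Fin (M1 β00 β10 β01 β20 β11 β02).rank → ℝ × ℝ)
        (ρ ρ' : Fin (M1 β00 β10 β01 β20 β11 β02).rank → ℝ),
        IsAtomicRep β00 β10 β01 β20 β11 β02 β30 β21 β12 β03
          (M1 β00 β10 β01 β20 β11 β02).rank pt ρ →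
        IsAtomicRep β00 β10 β01 β20 β11 β02 β30 β21 β12 β03
          (M1 β00 β10 β01 β20 β11 β02).rank pt' ρ' →
        Set.range (fun k => (pt k, ρ k)) = Set.range (fun k => (pt' k, ρ' k)) := by
  obtain ⟨W, hW⟩ := hW
  refine ⟨?_, fun pt pt' ρ ρ' h h' => h.range_eq (by omega) h'⟩
  rcases hrank with h | h <;> rw [h]
  · exact exists_isAtomicRep_of_rank_eq_one hβ00 h hW
  · exact exists_isAtomicRep_of_rank_eq_two hβ00 hpsd h hW
end

section
/- Suppose M1 is positive definite, let W = M1⁻¹·B2 and S = Wᵀ·M1·W = [[x, a, b], [a, y, t], [b, t, z]], and suppose b ≠ y. Then the sequence β^{(3)} admits a 4-atomic representing measure. -/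
/-!
Moment sequences transform covariantly under affine changes of coordinates and under rescaling
of the weights, so, using `M(1) > 0`, one may assume the sequence is isotropic: mass `1`, mean
`0` and identity covariance. A rotation then makes `β21` vanish: `β21` of the sequence rotated by
`θ` is a cubic form in `(cos θ, sin θ)`, so it takes opposite values at `θ = 0` and `θ = π`. An
isotropic sequence with `β21 = 0` is represented by two atoms on the `x`-axis and two on the line
`x = β12`; the weights on the two lines are chosen so that the two one-dimensional cubic moment
problems they carry have positive definite Hankel matrices, and each is solved by two atoms.
-/

open Matrix

theorem exists_two_atoms (m0 m1 m2 m3 : ℝ) (h0 : 0 < m0) (hD : 0 < m0 * m2 - m1 ^ 2) :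
    ∃ u₁ u₂ τ₁ τ₂ : ℝ, u₁ ≠ u₂ ∧ 0 < τ₁ ∧ 0 < τ₂ ∧ τ₁ + τ₂ = m0 ∧ τ₁ * u₁ + τ₂ * u₂ = m1 ∧
      τ₁ * u₁ ^ 2 + τ₂ * u₂ ^ 2 = m2 ∧ τ₁ * u₁ ^ 3 + τ₂ * u₂ ^ 3 = m3 := by
  -- the atoms are the roots of `z ^ 2 - a z - b`, where `(a, b)` solves the Hankel recursion
  set D := m0 * m2 - m1 ^ 2
  set a := (m0 * m3 - m1 * m2) / D
  set b := (m2 ^ 2 - m1 * m3) / D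
  have hrec₂ : m2 = a * m1 + b * m0 := by simp only [a, b]; field_simp; ring
  have hrec₃ : m3 = a * m2 + b * m1 := by simp only [a, b]; field_simp; ring
  clear_value a b
  have hdisc : 0 < a ^ 2 + 4 * b := by
    have : m0 ^ 2 * (a ^ 2 + 4 * b) = (a * m0 - 2 * m1) ^ 2 + 4 * D := by
      linear_combination -4 * m0 * hrec₂
    nlinarith [sq_nonneg (a * m0 - 2 * m1)]
  obtain ⟨s, hs, hs2⟩ : ∃ s : ℝ, 0 < s ∧ s ^ 2 = a ^ 2 + 4 * b :=
    ⟨√(a ^ 2 + 4 * b), Real.sqrt_pos.2 hdisc, Real.sq_sqrt hdisc.le⟩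
  obtain ⟨u₁, u₂, rfl, hprod, hgap⟩ : ∃ u₁ u₂ : ℝ, u₁ + u₂ = a ∧ b = -(u₁ * u₂) ∧ u₁ - u₂ = s :=
    ⟨(a + s) / 2, (a - s) / 2, by ring, by linear_combination -hs2 / 4, by ring⟩
  subst hprod
  have hweight (u v : ℝ) (hsum : u + v = u₁ + u₂) (hprod : u * v = u₁ * u₂) (huv : u - v ≠ 0) :
      0 < (m1 - m0 * v) / (u - v) := by
    have : m0 * ((m1 - m0 * v) * (u - v)) = (m0 * v - m1) ^ 2 + D := by
      linear_combination m0 * m1 * hsum - m0 ^ 2 * hprod - m0 * hrec₂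
    exact div_pos_iff.2 (mul_pos_iff.1 (pos_of_mul_pos_right (this ▸ by positivity) h0.le))
  have hne : u₁ - u₂ ≠ 0 := hgap ▸ hs.ne'
  have hτ₂ : 0 < (m0 * u₁ - m1) / (u₁ - u₂) := by
    have := hweight u₂ u₁ (add_comm _ _) (mul_comm _ _) (by rwa [← neg_sub, neg_ne_zero])
    rwa [← neg_div_neg_eq, neg_sub, neg_sub] at this
  refine ⟨u₁, u₂, (m1 - m0 * u₂) / (u₁ - u₂), (m0 * u₁ - m1) / (u₁ - u₂), sub_ne_zero.1 hne,
    hweight u₁ u₂ rfl rfl hne, hτ₂, ?_, ?_, ?_, ?_⟩ <;> field_simp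
  · ring
  · ring
  · linear_combination (u₂ - u₁) * hrec₂
  · linear_combination (u₂ - u₁) * hrec₃ + (u₂ - u₁) * (u₁ + u₂) * hrec₂

@[ext]
structure CubicSeq where
  (β00 β10 β01 β20 β11 β02 β30 β21 β12 β03 : ℝ)

namespace CubicSeq

variable {r : ℕ}

def moments (pt : Fin r → ℝ × ℝ) (ρ : Fin r → ℝ) : CubicSeq :=
  let m (i j : ℕ) := ∑ k, ρ k * (pt k).1 ^ i * (pt k).2 ^ j
  ⟨m 0 0, m 1 0, m 0 1, m 2 0, m 1 1, m 0 2, m 3 0, m 2 1, m 1 2, m 0 3⟩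

def IsRep (β : CubicSeq) (pt : Fin r → ℝ × ℝ) (ρ : Fin r → ℝ) : Prop :=
  Function.Injective pt ∧ (∀ k, 0 < ρ k) ∧ β = moments pt ρ

def HasRep (β : CubicSeq) (r : ℕ) : Prop :=
  ∃ (pt : Fin r → ℝ × ℝ) (ρ : Fin r → ℝ), β.IsRep pt ρ

def smul (c : ℝ) (β : CubicSeq) : CubicSeq :=
  ⟨c * β.β00, c * β.β10, c * β.β01, c * β.β20, c * β.β11, c * β.β02,
    c * β.β30, c * β.β21, c * β.β12, c * β.β03⟩

def translate (g l : ℝ) (β : CubicSeq) : CubicSeq where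
  β00 := β.β00
  β10 := β.β10 + g * β.β00
  β01 := β.β01 + l * β.β00
  β20 := β.β20 + 2 * g * β.β10 + g ^ 2 * β.β00
  β11 := β.β11 + g * β.β01 + l * β.β10 + g * l * β.β00
  β02 := β.β02 + 2 * l * β.β01 + l ^ 2 * β.β00
  β30 := β.β30 + 3 * g * β.β20 + 3 * g ^ 2 * β.β10 + g ^ 3 * β.β00
  β21 := β.β21 + 2 * g * β.β11 + l * β.β20 + g ^ 2 * β.β01 + 2 * g * l * β.β10
    + g ^ 2 * l * β.β00
  β12 := β.β12 + 2 * l * β.β11 + g * β.β02 + l ^ 2 * β.β10 + 2 * g * l * β.β01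
    + g * l ^ 2 * β.β00
  β03 := β.β03 + 3 * l * β.β02 + 3 * l ^ 2 * β.β01 + l ^ 3 * β.β00

def linearMap (a b c d : ℝ) (β : CubicSeq) : CubicSeq where
  β00 := β.β00
  β10 := a * β.β10 + b * β.β01
  β01 := c * β.β10 + d * β.β01
  β20 := a ^ 2 * β.β20 + 2 * a * b * β.β11 + b ^ 2 * β.β02
  β11 := a * c * β.β20 + (a * d + b * c) * β.β11 + b * d * β.β02
  β02 := c ^ 2 * β.β20 + 2 * c * d * β.β11 + d ^ 2 * β.β02
  β30 := a ^ 3 * β.β30 + 3 * a ^ 2 * b * β.β21 + 3 * a * b ^ 2 * β.β12 + b ^ 3 * β.β03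
  β21 := a ^ 2 * c * β.β30 + (a ^ 2 * d + 2 * a * b * c) * β.β21
    + (2 * a * b * d + b ^ 2 * c) * β.β12 + b ^ 2 * d * β.β03
  β12 := a * c ^ 2 * β.β30 + (2 * a * c * d + b * c ^ 2) * β.β21
    + (a * d ^ 2 + 2 * b * c * d) * β.β12 + b * d ^ 2 * β.β03
  β03 := c ^ 3 * β.β30 + 3 * c ^ 2 * d * β.β21 + 3 * c * d ^ 2 * β.β12 + d ^ 3 * β.β03

variable (pt : Fin r → ℝ × ℝ) (ρ : Fin r → ℝ)

theorem moments_smul (c : ℝ) : moments pt (fun k => c * ρ k) = (moments pt ρ).smul c := by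
  ext <;> simp only [moments, smul, Finset.mul_sum] <;>
    exact Finset.sum_congr rfl fun _ _ => by ring

theorem moments_translate (g l : ℝ) :
    moments (fun k => ((pt k).1 + g, (pt k).2 + l)) ρ = (moments pt ρ).translate g l := by
  ext <;> simp only [moments, translate, Finset.mul_sum, ← Finset.sum_add_distrib] <;>
    exact Finset.sum_congr rfl fun _ _ => by ring

theorem moments_linearMap (a b c d : ℝ) :
    moments (fun k => (a * (pt k).1 + b * (pt k).2, c * (pt k).1 + d * (pt k).2)) ρ =
      (moments pt ρ).linearMap a b c d := by
  ext <;> simp only [moments, linearMap, Finset.mul_sum, ← Finset.sum_add_distrib] <;>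
    exact Finset.sum_congr rfl fun _ _ => by ring

variable {β : CubicSeq}

theorem HasRep.of_smul {c : ℝ} (hc : 0 < c) (h : (β.smul c).HasRep r) : β.HasRep r := by
  obtain ⟨pt, ρ, hinj, hpos, hβ⟩ := h
  refine ⟨pt, fun k => c⁻¹ * ρ k, hinj, fun k => mul_pos (inv_pos.2 hc) (hpos k), ?_⟩
  rw [moments_smul, ← hβ]
  ext <;> simp only [smul] <;> field_simp

theorem HasRep.of_translate {g l : ℝ} (h : (β.translate g l).HasRep r) : β.HasRep r := by
  obtain ⟨pt, ρ, hinj, hpos, hβ⟩ := h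
  refine ⟨fun k => ((pt k).1 + -g, (pt k).2 + -l), ρ, fun m n hmn => hinj ?_, hpos, ?_⟩
  · exact Prod.ext_iff.2 (by simpa using hmn)
  · rw [moments_translate, ← hβ]
    ext <;> simp only [translate] <;> ring

theorem HasRep.of_linearMap {a b c d : ℝ} (hdet : a * d - b * c ≠ 0)
    (h : (β.linearMap a b c d).HasRep r) : β.HasRep r := by
  obtain ⟨pt, ρ, hinj, hpos, hβ⟩ := h
  set δ := a * d - b * c
  refine ⟨fun k => (d / δ * (pt k).1 + -b / δ * (pt k).2, -c / δ * (pt k).1 + a / δ * (pt k).2),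
    ρ, fun m n hmn => hinj ?_, hpos, ?_⟩
  · simp only [Prod.mk.injEq] at hmn
    obtain ⟨h1, h2⟩ := hmn
    field_simp at h1 h2
    ext
    · exact mul_left_cancel₀ hdet (by linear_combination a * h1 + b * h2)
    · exact mul_left_cancel₀ hdet (by linear_combination c * h1 + d * h2)
  · rw [moments_linearMap, ← hβ]
    ext <;> simp only [linearMap] <;> field_simp <;> ring

def IsIsotropic (β : CubicSeq) : Prop :=
  β.β00 = 1 ∧ β.β10 = 0 ∧ β.β01 = 0 ∧ β.β20 = 1 ∧ β.β11 = 0 ∧ β.β02 = 1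

theorem IsIsotropic.rotate {c s : ℝ} (hcs : c ^ 2 + s ^ 2 = 1) (hβ : β.IsIsotropic) :
    (β.linearMap c s (-s) c).IsIsotropic := by
  obtain ⟨h00, h10, h01, h20, h11, h02⟩ := hβ
  refine ⟨h00, ?_, ?_, ?_, ?_, ?_⟩ <;> simp only [linearMap, h10, h01, h20, h11, h02]
  · ring
  · ring
  · linear_combination hcs
  · ring
  · linear_combination hcs

theorem IsIsotropic.hasRep_four_of_β21_eq_zero (hβ : β.IsIsotropic) (h21 : β.β21 = 0) :
    β.HasRep 4 := by
  obtain ⟨h00, h10, h01, h20, h11, h02⟩ := hβ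
  -- two atoms on the `x`-axis and two on the vertical line `x = α`, the latter carrying mass `w`
  set α := β.β12 with hα
  set w := 1 / (2 * (1 + α ^ 2))
  have hw : 0 < w := by positivity
  have hwα : w * (1 + α ^ 2) = 1 / 2 := by simp only [w]; field_simp
  obtain ⟨u₁, u₂, τ₁, τ₂, hu, hτ₁, hτ₂, hτ0, hτ1, hτ2, hτ3⟩ :=
    exists_two_atoms (1 - w) (-(w * α)) (1 - w * α ^ 2) (β.β30 - w * α ^ 3)
      (by nlinarith [sq_nonneg α]) (by nlinarith)
  obtain ⟨v₁, v₂, σ₁, σ₂, hv, hσ₁, hσ₂, hσ0, hσ1, hσ2, hσ3⟩ :=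
    exists_two_atoms w 0 1 β.β03 hw (by simpa using hw)
  have hv₁ : v₁ ≠ 0 := by
    rintro rfl
    exact hv (mul_left_cancel₀ hσ₂.ne' (by linarith)).symm
  have hv₂ : v₂ ≠ 0 := by
    rintro rfl
    exact hv (mul_left_cancel₀ hσ₁.ne' (by linarith))
  refine ⟨![(u₁, 0), (u₂, 0), (α, v₁), (α, v₂)], ![τ₁, τ₂, σ₁, σ₂], ?_, ?_, ?_⟩
  · intro m n hmn
    fin_cases m <;> fin_cases n <;> simp_all [Prod.ext_iff, eq_comm]
  · intro k
    fin_cases k <;> assumption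
  · ext <;> simp only [moments, Fin.sum_univ_four, cons_val_zero, cons_val_one, cons_val]
    · linear_combination h00 - hτ0 - hσ0
    · linear_combination h10 - hτ1 - α * hσ0
    · linear_combination h01 - hσ1
    · linear_combination h20 - hτ2 - α ^ 2 * hσ0
    · linear_combination h11 - α * hσ1
    · linear_combination h02 - hσ2
    · linear_combination -hτ3 - α ^ 3 * hσ0
    · linear_combination h21 - α ^ 2 * hσ1
    · linear_combination -α * hσ2 - hα
    · linear_combination -hσ3

theorem IsIsotropic.hasRep_four (hβ : β.IsIsotropic) : β.HasRep 4 := by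
  -- `β21` of the rotation by `θ` is a cubic form in `(cos θ, sin θ)`: it changes sign on `[0, π]`
  let F (θ : ℝ) := (β.linearMap (Real.cos θ) (Real.sin θ) (-Real.sin θ) (Real.cos θ)).β21
  have hF : Continuous F := by simp only [F, linearMap]; fun_prop
  have hFπ : F Real.pi = -F 0 := by simp [F, linearMap]
  have h0 : (0 : ℝ) ∈ Set.uIcc (F 0) (F Real.pi) := by
    rw [hFπ, Set.mem_uIcc]
    rcases le_total (F 0) 0 with h | h
    · exact Or.inl ⟨h, by linarith⟩
    · exact Or.inr ⟨by linarith, h⟩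
  obtain ⟨θ, -, hθ⟩ := intermediate_value_uIcc hF.continuousOn h0
  have hcs := Real.cos_sq_add_sin_sq θ
  exact HasRep.of_linearMap (by simp [← sq])
    ((hβ.rotate hcs).hasRep_four_of_β21_eq_zero hθ)

theorem hasRep_four_of_centered (h00 : β.β00 = 1) (h10 : β.β10 = 0) (h01 : β.β01 = 0)
    (h20 : 0 < β.β20) (hdet : 0 < β.β20 * β.β02 - β.β11 ^ 2) : β.HasRep 4 := by
  -- whitening: `(x, y) ↦ (x / √A, (A y - C x) / √(A D))` for the covariance `[[A, C], [C, B]]`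
  set A := β.β20
  set C := β.β11
  set D := A * β.β02 - C ^ 2
  obtain ⟨a, ha, ha2⟩ : ∃ a : ℝ, 0 < a ∧ a ^ 2 = A :=
    ⟨√A, Real.sqrt_pos.2 h20, Real.sq_sqrt h20.le⟩
  obtain ⟨d, hd, hd2⟩ : ∃ d : ℝ, 0 < d ∧ d ^ 2 = D :=
    ⟨√D, Real.sqrt_pos.2 hdet, Real.sq_sqrt hdet.le⟩
  refine HasRep.of_linearMap (a := 1 / a) (b := 0) (c := -C / (a * d)) (d := a / d)
    (by simp [ha.ne', hd.ne']) (IsIsotropic.hasRep_four ?_)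
  refine ⟨h00, ?_, ?_, ?_, ?_, ?_⟩ <;> simp only [linearMap, h10, h01] <;> field_simp
  · ring
  · ring
  · linear_combination -ha2
  · linear_combination C * ha2
  · linear_combination (-2 * C ^ 2 + β.β02 * (a ^ 2 + A) - D) * ha2 - a ^ 2 * hd2

theorem hasRep_four_of_posDef (hpd : (M1 β.β00 β.β10 β.β01 β.β20 β.β11 β.β02).PosDef) :
    β.HasRep 4 := by
  have h00 : 0 < β.β00 := by simpa [M1] using hpd.diag_pos (i := 0)
  have hminor : 0 < β.β00 * β.β20 - β.β10 ^ 2 := by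
    have := (hpd.submatrix (e := ![0, 1]) (by decide)).det_pos
    rw [det_fin_two] at this
    simpa [M1, sq] using this
  have hdet : 0 < β.β00 * (β.β20 * β.β02 - β.β11 ^ 2) - β.β10 * (β.β10 * β.β02 - β.β11 * β.β01)
      + β.β01 * (β.β10 * β.β11 - β.β20 * β.β01) := by
    have := hpd.det_pos
    simp only [M1, det_fin_three, of_apply, cons_val', cons_val_zero, cons_val_one, cons_val,
      cons_val_fin_one] at this
    linarith
  refine HasRep.of_smul (inv_pos.2 h00) <| HasRep.of_translate (g := -(β.β10 / β.β00))
    (l := -(β.β01 / β.β00)) (hasRep_four_of_centered ?_ ?_ ?_ ?_ ?_) <;>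
    simp only [translate, smul]
  · field_simp
  · field_simp; ring
  · field_simp; ring
  · field_simp
    linarith
  · field_simp
    linarith [mul_pos h00 hdet]

end CubicSeq

theorem isAtomicRep_of_isRep {β00 β10 β01 β20 β11 β02 β30 β21 β12 β03 : ℝ} {r : ℕ}
    {pt : Fin r → ℝ × ℝ} {ρ : Fin r → ℝ}
    (h : (⟨β00, β10, β01, β20, β11, β02, β30, β21, β12, β03⟩ : CubicSeq).IsRep pt ρ) :
    IsAtomicRep β00 β10 β01 β20 β11 β02 β30 β21 β12 β03 r pt ρ := by
  obtain ⟨hinj, hpos, hmom⟩ := h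
  simp only [CubicSeq.moments, CubicSeq.mk.injEq] at hmom
  obtain ⟨h00, h10, h01, h20, h11, h02, h30, h21, h12, h03⟩ := hmom
  refine ⟨hinj, hpos, fun i j hij => ?_⟩
  have hi : i ≤ 3 := by omega
  have hj : j ≤ 3 := by omega
  interval_cases i <;> interval_cases j <;> first | omega | assumption

theorem cubic_posdef_b_ne_y_four_atomic_general
    (β00 β10 β01 β20 β11 β02 β30 β21 β12 β03 : ℝ)
    (hpd : (M1 β00 β10 β01 β20 β11 β02).PosDef) :
    ∃ (pt : Fin 4 → ℝ × ℝ) (ρ : Fin 4 → ℝ),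
      IsAtomicRep β00 β10 β01 β20 β11 β02 β30 β21 β12 β03 4 pt ρ := by
  obtain ⟨pt, ρ, hrep⟩ := CubicSeq.hasRep_four_of_posDef
    (β := ⟨β00, β10, β01, β20, β11, β02, β30, β21, β12, β03⟩) hpd
  exact ⟨pt, ρ, isAtomicRep_of_isRep hrep⟩

/-- Theorem 3.8: if `M(1) > 0`, `W = M1⁻¹·B2`, `S = WᵀM1W = [[x,a,b],[a,y,t],[b,t,z]]`
and `b ≠ y`, then `β^{(3)}` admits a `4`-atomic representing measure. -/
theorem cubic_posdef_b_ne_y_four_atomic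
    (β00 β10 β01 β20 β11 β02 β30 β21 β12 β03 : ℝ) (hβ00 : 0 < β00)
    (x a b y t z : ℝ)
    (hpd : (M1 β00 β10 β01 β20 β11 β02).PosDef)
    (hS : ((M1 β00 β10 β01 β20 β11 β02)⁻¹ * B2 β20 β11 β02 β30 β21 β12 β03)ᵀ *
            M1 β00 β10 β01 β20 β11 β02 *
            ((M1 β00 β10 β01 β20 β11 β02)⁻¹ * B2 β20 β11 β02 β30 β21 β12 β03) =
          !![x, a, b; a, y, t; b, t, z])
    (hby : b ≠ y) :
    ∃ (pt : Fin 4 → ℝ × ℝ) (ρ : Fin 4 → ℝ),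
      IsAtomicRep β00 β10 β01 β20 β11 β02 β30 β21 β12 β03 4 pt ρ :=
  cubic_posdef_b_ne_y_four_atomic_general β00 β10 β01 β20 β11 β02 β30 β21 β12 β03 hpd
end

section
/- Suppose M1 is positive definite, let W = M1⁻¹·B2 and S = Wᵀ·M1·W = [[x, a, b], [a, y, t], [b, t, z]], and suppose b > y. Define the quartic Hankel block C with β40 = x, β31 = a, β22 = b, β13 = t, β04 = z, i.e., C = [[x, a, b], [a, b, t], [b, t, z]]. Then C − S equals the 3×3 matrix whose only nonzero entry is b − y in position (2,2); C − S is positive semidefinite of rank 1; and the 6×6 block matrix M2 = [[M1, B2], [B2ᵀ, C]] is positive semidefinite with rank M2 = 4. -/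
open Matrix

/-- Case `b > y` in Theorem 3.8: with the choice of quartic moments
`β40 = x, β31 = a, β22 = b, β13 = t, β04 = z`, one gets
`C − S = diag(0, b − y, 0)`, `C − S ⪰ 0` of rank `1`, and `M(2) ⪰ 0`
with `rank M(2) = 4`. -/
theorem cubic_b_gt_y_extension
    (β00 β10 β01 β20 β11 β02 β30 β21 β12 β03 : ℝ) (hβ00 : 0 < β00)
    (x a b y t z : ℝ)
    (hpd : (M1 β00 β10 β01 β20 β11 β02).PosDef)
    (hS : ((M1 β00 β10 β01 β20 β11 β02)⁻¹ * B2 β20 β11 β02 β30 β21 β12 β03)ᵀ *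
            M1 β00 β10 β01 β20 β11 β02 *
            ((M1 β00 β10 β01 β20 β11 β02)⁻¹ * B2 β20 β11 β02 β30 β21 β12 β03) =
          !![x, a, b; a, y, t; b, t, z])
    (hby : b > y) :
    !![x, a, b; a, b, t; b, t, z] - !![x, a, b; a, y, t; b, t, z] =
        !![0, 0, 0; 0, b - y, 0; 0, 0, 0] ∧
      (!![x, a, b; a, b, t; b, t, z] - !![x, a, b; a, y, t; b, t, z]).PosSemidef ∧
      (!![x, a, b; a, b, t; b, t, z] - !![x, a, b; a, y, t; b, t, z]).rank = 1 ∧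
      (Matrix.fromBlocks (M1 β00 β10 β01 β20 β11 β02)
          (B2 β20 β11 β02 β30 β21 β12 β03)
          (B2 β20 β11 β02 β30 β21 β12 β03)ᵀ
          !![x, a, b; a, b, t; b, t, z]).PosSemidef ∧
      (Matrix.fromBlocks (M1 β00 β10 β01 β20 β11 β02)
          (B2 β20 β11 β02 β30 β21 β12 β03)
          (B2 β20 β11 β02 β30 β21 β12 β03)ᵀ
          !![x, a, b; a, b, t; b, t, z]).rank = 4 := by
  set A := M1 β00 β10 β01 β20 β11 β02 with hAdef
  set B := B2 β20 β11 β02 β30 β21 β12 β03 with hBdef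
  have hdet : IsUnit A.det := isUnit_iff_ne_zero.mpr hpd.det_pos.ne'
  haveI : Invertible A := A.invertibleOfIsUnitDet hdet
  have hne : b - y ≠ 0 := sub_ne_zero_of_ne hby.ne'
  have hD0 : (0:ℝ) ≤ b - y := le_of_lt (sub_pos.mpr hby)
  -- the difference matrix
  have h1 : !![x, a, b; a, b, t; b, t, z] - !![x, a, b; a, y, t; b, t, z] =
      !![0, 0, 0; 0, b - y, 0; 0, 0, 0] := by
    ext i j
    fin_cases i <;> fin_cases j <;> simp [Matrix.vecHead, Matrix.vecTail]
  have hdiag : (!![(0:ℝ), 0, 0; 0, b - y, 0; 0, 0, 0] : Matrix (Fin 3) (Fin 3) ℝ) =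
      diagonal ![0, b - y, 0] := by
    ext i j
    fin_cases i <;> fin_cases j <;> simp [diagonal, Matrix.vecHead, Matrix.vecTail]
  have hDpsd : (diagonal ![(0:ℝ), b - y, 0]).PosSemidef := by
    rw [posSemidef_diagonal_iff]
    intro i; fin_cases i <;> simp [hD0]
  have h2 : (!![x, a, b; a, b, t; b, t, z] - !![x, a, b; a, y, t; b, t, z]).PosSemidef := by
    rw [h1, hdiag]; exact hDpsd
  have h3 : (!![x, a, b; a, b, t; b, t, z] - !![x, a, b; a, y, t; b, t, z]).rank = 1 := by
    rw [h1, hdiag, Matrix.rank_diagonal, Fintype.card_subtype]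
    have : (Finset.univ.filter fun i => ![(0:ℝ), b - y, 0] i ≠ 0) = {1} := by
      ext i
      fin_cases i <;> simp [hne]
    rw [this]; rfl
  -- symmetry of A
  have hAt : Aᵀ = A := by
    ext i j
    fin_cases i <;> fin_cases j <;> simp [hAdef, M1]
  have hAH : Aᴴ = A := hpd.1
  -- Schur complement computation
  have hSBA : Bᵀ * A⁻¹ * B = !![x, a, b; a, y, t; b, t, z] := by
    rw [Matrix.transpose_mul, Matrix.transpose_nonsing_inv, hAt,
      Matrix.mul_assoc (Bᵀ * A⁻¹) A, Matrix.mul_nonsing_inv_cancel_left A B hdet] at hS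
    exact hS
  have hSchur : !![x, a, b; a, b, t; b, t, z] - Bᵀ * A⁻¹ * B = diagonal ![0, b - y, 0] := by
    rw [hSBA, h1, hdiag]
  have hBH : Bᴴ = Bᵀ := by
    ext i j; simp [conjTranspose_apply]
  -- positive semidefiniteness of M(2)
  have h4 : (Matrix.fromBlocks A B Bᵀ !![x, a, b; a, b, t; b, t, z]).PosSemidef := by
    rw [← hBH]
    rw [Matrix.PosDef.fromBlocks₁₁ B !![x, a, b; a, b, t; b, t, z] hpd]
    rw [hBH, hSchur]
    exact hDpsd
  -- rank of M(2)
  have h5 : (Matrix.fromBlocks A B Bᵀ !![x, a, b; a, b, t; b, t, z]).rank = 4 := by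
    rw [Matrix.fromBlocks_eq_of_invertible₁₁ A B Bᵀ !![x, a, b; a, b, t; b, t, z]]
    rw [Matrix.rank_mul_eq_left_of_isUnit_det _ _ (by
      rw [Matrix.det_fromBlocks_zero₂₁]; simp)]
    rw [Matrix.rank_mul_eq_right_of_isUnit_det _ _ (by
      rw [Matrix.det_fromBlocks_zero₁₂]; simp)]
    have hinv : ⅟A = A⁻¹ := invOf_eq_nonsing_inv A
    rw [hinv, hSchur]
    have hfac : Matrix.fromBlocks A 0 0 (diagonal ![(0:ℝ), b - y, 0]) =
        Matrix.fromBlocks A 0 0 (1 : Matrix (Fin 3) (Fin 3) ℝ) *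
          Matrix.fromBlocks (1 : Matrix (Fin 3) (Fin 3) ℝ) 0 0
            (diagonal ![(0:ℝ), b - y, 0]) := by
      simp [Matrix.fromBlocks_multiply]
    rw [hfac, Matrix.rank_mul_eq_right_of_isUnit_det _ _ (by
      rw [Matrix.det_fromBlocks_zero₂₁]; simpa using hdet)]
    rw [← Matrix.diagonal_one, Matrix.fromBlocks_diagonal, Matrix.rank_diagonal,
      Fintype.card_subtype]
    rw [show (4:ℕ) = ({Sum.inl 0, Sum.inl 1, Sum.inl 2, Sum.inr 1} :
      Finset (Fin 3 ⊕ Fin 3)).card by decide]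
    congr 1
    ext i
    rcases i with i | i <;> fin_cases i <;> simp [hne]
  exact ⟨h1, h2, h3, h4, h5⟩
end

section
/- Suppose M1 is positive definite, let W = M1⁻¹·B2 and S = Wᵀ·M1·W = [[x, a, b], [a, y, t], [b, t, z]], suppose b < y, and define the quartic Hankel block C = [[x+1, a, y], [a, y, t], [y, t, z + (y−b)²]] and M2 = [[M1, B2], [B2ᵀ, C]] (with columns indexed in the order 1, X, Y, X², XY, Y²). Then there exist real numbers c0, c1, c2 such that the XY column (column index 4) of M2 equals c0 times column 0 plus c1 times column 1 plus c2 times column 2, and there exist real numbers d0, d1, d2 such that the Y² column (column index 5) of M2 equals (y − b) times the X² column (column index 3) plus d0 times column 0 plus d1 times column 1 plus d2 times column 2. -/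
open Matrix

/-- The extension `M(2) = [[M1, B2], [B2ᵀ, C]]`; its rows/columns are indexed by
`Fin 3 ⊕ Fin 3`, with `Sum.inl 0, Sum.inl 1, Sum.inl 2` corresponding to the
columns `1, X, Y` and `Sum.inr 0, Sum.inr 1, Sum.inr 2` to `X², XY, Y²`. -/
def M2 (β00 β10 β01 β20 β11 β02 β30 β21 β12 β03 : ℝ)
    (C : Matrix (Fin 3) (Fin 3) ℝ) : Matrix (Fin 3 ⊕ Fin 3) (Fin 3 ⊕ Fin 3) ℝ :=
  Matrix.fromBlocks (M1 β00 β10 β01 β20 β11 β02) (B2 β20 β11 β02 β30 β21 β12 β03)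
    (B2 β20 β11 β02 β30 β21 β12 β03)ᵀ C

/-- Case `b < y` in Theorem 3.8: with
`C = [[x+1,a,y],[a,y,t],[y,t,z+(y−b)²]]`, in `M(2)` the column `XY` is a linear
combination of the columns `1, X, Y`, and the column `Y²` is `(y − b)` times the
column `X²` plus a linear combination of the columns `1, X, Y`. -/
theorem cubic_b_lt_y_column_relations
    (β00 β10 β01 β20 β11 β02 β30 β21 β12 β03 : ℝ) (hβ00 : 0 < β00)
    (x a b y t z : ℝ)
    (hpd : (M1 β00 β10 β01 β20 β11 β02).PosDef)
    (hS : ((M1 β00 β10 β01 β20 β11 β02)⁻¹ * B2 β20 β11 β02 β30 β21 β12 β03)ᵀ *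
            M1 β00 β10 β01 β20 β11 β02 *
            ((M1 β00 β10 β01 β20 β11 β02)⁻¹ * B2 β20 β11 β02 β30 β21 β12 β03) =
          !![x, a, b; a, y, t; b, t, z])
    (hby : b < y) :
    (∃ c0 c1 c2 : ℝ, ∀ i : Fin 3 ⊕ Fin 3,
        M2 β00 β10 β01 β20 β11 β02 β30 β21 β12 β03
            !![x + 1, a, y; a, y, t; y, t, z + (y - b) ^ 2] i (Sum.inr 1) =
          c0 * M2 β00 β10 β01 β20 β11 β02 β30 β21 β12 β03
              !![x + 1, a, y; a, y, t; y, t, z + (y - b) ^ 2] i (Sum.inl 0) +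
          c1 * M2 β00 β10 β01 β20 β11 β02 β30 β21 β12 β03
              !![x + 1, a, y; a, y, t; y, t, z + (y - b) ^ 2] i (Sum.inl 1) +
          c2 * M2 β00 β10 β01 β20 β11 β02 β30 β21 β12 β03
              !![x + 1, a, y; a, y, t; y, t, z + (y - b) ^ 2] i (Sum.inl 2)) ∧
      ∃ d0 d1 d2 : ℝ, ∀ i : Fin 3 ⊕ Fin 3,
        M2 β00 β10 β01 β20 β11 β02 β30 β21 β12 β03
            !![x + 1, a, y; a, y, t; y, t, z + (y - b) ^ 2] i (Sum.inr 2) =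
          (y - b) * M2 β00 β10 β01 β20 β11 β02 β30 β21 β12 β03
              !![x + 1, a, y; a, y, t; y, t, z + (y - b) ^ 2] i (Sum.inr 0) +
          d0 * M2 β00 β10 β01 β20 β11 β02 β30 β21 β12 β03
              !![x + 1, a, y; a, y, t; y, t, z + (y - b) ^ 2] i (Sum.inl 0) +
          d1 * M2 β00 β10 β01 β20 β11 β02 β30 β21 β12 β03
              !![x + 1, a, y; a, y, t; y, t, z + (y - b) ^ 2] i (Sum.inl 1) +
          d2 * M2 β00 β10 β01 β20 β11 β02 β30 β21 β12 β03
              !![x + 1, a, y; a, y, t; y, t, z + (y - b) ^ 2] i (Sum.inl 2) := by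
  set A := M1 β00 β10 β01 β20 β11 β02 with hA
  set B := B2 β20 β11 β02 β30 β21 β12 β03 with hB
  set W := A⁻¹ * B with hW
  set S : Matrix (Fin 3) (Fin 3) ℝ := !![x, a, b; a, y, t; b, t, z] with hSdef
  have hdet : IsUnit A.det := isUnit_iff_ne_zero.mpr (ne_of_gt hpd.det_pos)
  have hMW : A * W = B := by
    rw [hW, ← Matrix.mul_assoc, Matrix.mul_nonsing_inv _ hdet, Matrix.one_mul]
  have hWB : Wᵀ * B = S := by rw [← hMW, ← Matrix.mul_assoc]; exact hS
  have hSsymm : Sᵀ = S := by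
    rw [hSdef]; ext i j; fin_cases i <;> fin_cases j <;> simp
  have hBW : Bᵀ * W = S := by
    have := congrArg Matrix.transpose hWB
    rw [Matrix.transpose_mul, Matrix.transpose_transpose, hSsymm] at this
    exact this
  have hM : ∀ j k : Fin 3, A j 0 * W 0 k + A j 1 * W 1 k + A j 2 * W 2 k = B j k := by
    intro j k
    have := congrFun (congrFun hMW j) k
    simpa [Matrix.mul_apply, Fin.sum_univ_three] using this
  have hN : ∀ j k : Fin 3, B 0 j * W 0 k + B 1 j * W 1 k + B 2 j * W 2 k = S j k := by
    intro j k
    have := congrFun (congrFun hBW j) k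
    simpa [Matrix.mul_apply, Fin.sum_univ_three] using this
  simp only [hA, hB, hSdef, M1, B2] at hM hN
  have e00 := hM 0 0
  have f00 := hN 0 0
  simp [M1, B2] at e00 f00
  have e01 := hM 0 1
  have f01 := hN 0 1
  simp [M1, B2] at e01 f01
  have e02 := hM 0 2
  have f02 := hN 0 2
  simp [M1, B2] at e02 f02
  have e10 := hM 1 0
  have f10 := hN 1 0
  simp [M1, B2] at e10 f10
  have e11 := hM 1 1
  have f11 := hN 1 1
  simp [M1, B2] at e11 f11
  have e12 := hM 1 2
  have f12 := hN 1 2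
  simp [M1, B2] at e12 f12
  have e20 := hM 2 0
  have f20 := hN 2 0
  simp [M1, B2] at e20 f20
  have e21 := hM 2 1
  have f21 := hN 2 1
  simp [M1, B2] at e21 f21
  have e22 := hM 2 2
  have f22 := hN 2 2
  simp [M1, B2] at e22 f22
  constructor
  · refine ⟨W 0 1, W 1 1, W 2 1, fun i => ?_⟩
    rcases i with j | j <;> fin_cases j <;>
        simp only [M2, Matrix.fromBlocks_apply₁₁, Matrix.fromBlocks_apply₁₂,
          Matrix.fromBlocks_apply₂₁, Matrix.fromBlocks_apply₂₂,
          Matrix.transpose_apply, M1, B2] <;>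
        simp <;>
      [linear_combination -e01; linear_combination -e11; linear_combination -e21;
       linear_combination -f01; linear_combination -f11; linear_combination -f21]
  · refine ⟨W 0 2 - (y - b) * W 0 0, W 1 2 - (y - b) * W 1 0,
      W 2 2 - (y - b) * W 2 0, fun i => ?_⟩
    rcases i with j | j <;> fin_cases j <;>
        simp only [M2, Matrix.fromBlocks_apply₁₁, Matrix.fromBlocks_apply₁₂,
          Matrix.fromBlocks_apply₂₁, Matrix.fromBlocks_apply₂₂,
          Matrix.transpose_apply, M1, B2] <;>
        simp <;>
      [linear_combination (y - b) * e00 - e02;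
       linear_combination (y - b) * e10 - e12;
       linear_combination (y - b) * e20 - e22;
       linear_combination (y - b) * f00 - f02;
       linear_combination (y - b) * f10 - f12;
       linear_combination (y - b) * f20 - f22]
end

section
/- Let β : ℕ × ℕ → ℝ and let M(2) be the moment matrix of order 2 of β (a 6×6 matrix indexed by the pairs (i,j) with i+j ≤ 2, with entry β(i+k, j+l) at row (i,j) and column (k,l)). Suppose M(2) is positive semidefinite and recursively determined, i.e.: there exist reals a, b, c such that the column of M(2) indexed by (2,0) equals a times the column (0,0) plus b times the column (1,0) plus c times the column (0,1); and there exist reals e0, e1, e2, e3, e4 such that the column indexed by (0,2) equals e0 times column (0,0) plus e1 times column (1,0) plus e2 times column (0,1) plus e3 times column (2,0) plus e4 times column (1,1). Then there exists β' : ℕ × ℕ → ℝ agreeing with β on all pairs (i,j) with i+j ≤ 4 such that the moment matrix M(3) of order 3 of β' (the 10×10 matrix indexed by pairs (i,j) with i+j ≤ 3, with entry β'(i+k, j+l)) is positive semidefinite and rank M(3) = rank M(2). -/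
open Matrix

/-- The index set of the moment matrix `M(n)`: pairs `(i, j)` with `i + j ≤ n`. -/
def MomentIdx (n : ℕ) := {p : ℕ × ℕ // p.1 + p.2 ≤ n}

instance (n : ℕ) : Fintype (MomentIdx n) :=
  Fintype.subtype ((Finset.range (n + 1) ×ˢ Finset.range (n + 1)).filter
      fun p => p.1 + p.2 ≤ n)
    (by
      intro p
      simp only [Finset.mem_filter, Finset.mem_product, Finset.mem_range]
      omega)

instance (n : ℕ) : DecidableEq (MomentIdx n) := by
  unfold MomentIdx; infer_instance

/-- The moment matrix `M(n)` of a double sequence `β`: the entry at row `(i,j)`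
and column `(k,l)` is `β (i+k, j+l)`. -/
def momentMatrix (n : ℕ) (β : ℕ × ℕ → ℝ) : Matrix (MomentIdx n) (MomentIdx n) ℝ :=
  fun p q => β (p.1.1 + q.1.1, p.1.2 + q.1.2)

/-!
Extend `β` beyond degree 4 by reading the two column relations as recursions: `X² = a + bX + cY`
when the first index is at least 2, and `Y² = e₀ + e₁X + e₂Y + e₃X² + e₄XY` otherwise. The rules
are compatible (the leading monomials `X²` and `Y²` are coprime), so the extension satisfies both
relations in every degree. Then every column of `M(3)` is a combination of the columns of degree
at most 2, so `M(3) = Vᴴ M(2) V` for some `V`, while `M(2)` is a principal submatrix of `M(3)`;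
positivity and rank pass from `M(2)` to `M(3)`.
-/

open Submodule Set

namespace Matrix

variable {m n o R : Type*} [Fintype o]

theorem exists_eq_submatrix_mul_of_col_mem_span [CommSemiring R] {M : Matrix m n R}
    {e : o → n} (h : ∀ j, M.col j ∈ span R (range (M.col ∘ e))) :
    ∃ V : Matrix o n R, M = M.submatrix id e * V := by
  choose w hw using fun j => (mem_span_range_iff_exists_fun R).1 (h j)
  refine ⟨of fun i j => w j i, ?_⟩
  ext k j
  rw [← col_apply M j k, ← hw j]
  simp [mul_apply, Finset.sum_apply, mul_comm]

theorem IsHermitian.exists_eq_conjTranspose_mul_submatrix_mul [CommSemiring R] [StarRing R]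
    {M : Matrix n n R} (hM : M.IsHermitian) {e : o → n}
    (h : ∀ j, M.col j ∈ span R (range (M.col ∘ e))) :
    ∃ V : Matrix o n R, M = Vᴴ * M.submatrix e e * V := by
  obtain ⟨V, hV⟩ := exists_eq_submatrix_mul_of_col_mem_span h
  have hrows : M.submatrix e id = M.submatrix e e * V := by
    conv_lhs => rw [hV]
    rw [submatrix_mul _ _ _ id _ Function.bijective_id, submatrix_submatrix, submatrix_id_id]
    rfl
  refine ⟨V, ?_⟩
  calc M = M.submatrix id e * V := hV
    _ = (M.submatrix e id)ᴴ * V := by rw [conjTranspose_submatrix, hM.eq]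
    _ = Vᴴ * M.submatrix e e * V := by rw [hrows, conjTranspose_mul, (hM.submatrix e).eq]

theorem IsHermitian.posSemidef_of_col_mem_span [Finite n] [CommRing R] [PartialOrder R]
    [StarRing R] {M : Matrix n n R} (hM : M.IsHermitian) {e : o → n}
    (h : ∀ j, M.col j ∈ span R (range (M.col ∘ e))) (hA : (M.submatrix e e).PosSemidef) :
    M.PosSemidef := by
  obtain ⟨V, hV⟩ := hM.exists_eq_conjTranspose_mul_submatrix_mul h
  rw [hV]
  exact hA.conjTranspose_mul_mul_same V

theorem IsHermitian.rank_eq_rank_submatrix_of_col_mem_span [Fintype n] [CommSemiring R]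
    [StarRing R] [StrongRankCondition R] {M : Matrix n n R} (hM : M.IsHermitian) {e : o → n}
    (h : ∀ j, M.col j ∈ span R (range (M.col ∘ e))) :
    M.rank = (M.submatrix e e).rank := by
  refine le_antisymm ?_ (rank_submatrix_le M e e)
  obtain ⟨V, hV⟩ := hM.exists_eq_conjTranspose_mul_submatrix_mul h
  calc M.rank = (Vᴴ * M.submatrix e e * V).rank := by rw [← hV]
    _ ≤ (Vᴴ * M.submatrix e e).rank := rank_mul_le_left _ _
    _ ≤ (M.submatrix e e).rank := rank_mul_le_right _ _

end Matrix

section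

variable {R : Type*} [CommRing R]

/- The column relations `X² = a·1 + b·X + c·Y` and `Y² = e0·1 + e1·X + e2·Y + e3·X² + e4·XY`
of the moment matrix `M(d)`. -/
def HasXSqRelation (β : ℕ × ℕ → R) (a b c : R) (d : ℕ) : Prop :=
  ∀ i j, i + j ≤ d → β (i + 2, j) = a * β (i, j) + b * β (i + 1, j) + c * β (i, j + 1)

def HasYSqRelation (β : ℕ × ℕ → R) (e0 e1 e2 e3 e4 : R) (d : ℕ) : Prop :=
  ∀ i j, i + j ≤ d → β (i, j + 2) = e0 * β (i, j) + e1 * β (i + 1, j) + e2 * β (i, j + 1) +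
    e3 * β (i + 2, j) + e4 * β (i + 1, j + 1)

def recursiveExtension (β : ℕ × ℕ → R) (a b c e0 e1 e2 e3 e4 : R) : ℕ × ℕ → R
  | (i, j) =>
    if _ : i + j ≤ 4 then β (i, j)
    else if _ : 2 ≤ i then
      a * recursiveExtension β a b c e0 e1 e2 e3 e4 (i - 2, j) +
        b * recursiveExtension β a b c e0 e1 e2 e3 e4 (i - 1, j) +
        c * recursiveExtension β a b c e0 e1 e2 e3 e4 (i - 2, j + 1)
    else
      e0 * recursiveExtension β a b c e0 e1 e2 e3 e4 (i, j - 2) +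
        e1 * recursiveExtension β a b c e0 e1 e2 e3 e4 (i + 1, j - 2) +
        e2 * recursiveExtension β a b c e0 e1 e2 e3 e4 (i, j - 1) +
        e3 * recursiveExtension β a b c e0 e1 e2 e3 e4 (i + 2, j - 2) +
        e4 * recursiveExtension β a b c e0 e1 e2 e3 e4 (i + 1, j - 1)
termination_by p => 9 * p.1 + 10 * p.2
decreasing_by all_goals omega

variable {β : ℕ × ℕ → R} {a b c e0 e1 e2 e3 e4 : R}

local notation "ρ" => recursiveExtension β a b c e0 e1 e2 e3 e4

theorem recursiveExtension_of_le {i j : ℕ} (h : i + j ≤ 4) : ρ (i, j) = β (i, j) := by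
  rw [recursiveExtension, dif_pos h]

theorem recursiveExtension_add_two_fst (hX : HasXSqRelation β a b c 2) (i j : ℕ) :
    ρ (i + 2, j) = a * ρ (i, j) + b * ρ (i + 1, j) + c * ρ (i, j + 1) := by
  by_cases h : i + j ≤ 2
  · simp (disch := omega) only [recursiveExtension_of_le]
    exact hX i j h
  · rw [recursiveExtension, dif_neg (by omega), dif_pos (by omega)]
    rfl

theorem recursiveExtension_add_two_snd (hX : HasXSqRelation β a b c 2)
    (hY : HasYSqRelation β e0 e1 e2 e3 e4 2) (i j : ℕ) :
    ρ (i, j + 2) = e0 * ρ (i, j) + e1 * ρ (i + 1, j) + e2 * ρ (i, j + 1) +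
      e3 * ρ (i + 2, j) + e4 * ρ (i + 1, j + 1) := by
  have hXρ := recursiveExtension_add_two_fst (e0 := e0) (e1 := e1) (e2 := e2) (e3 := e3)
    (e4 := e4) hX
  induction i using Nat.strong_induction_on generalizing j with
  | _ i ih =>
  by_cases hi : 2 ≤ i
  · -- Expand both sides by the `X²` rule; what remains is the `Y²` rule at `i - 2` and `i - 1`.
    obtain ⟨i, rfl⟩ : ∃ k, i = k + 2 := ⟨i - 2, by omega⟩
    linear_combination hXρ i (j + 2) + a * ih i (by omega) j + b * ih (i + 1) (by omega) j +
      c * ih i (by omega) (j + 1) - e0 * hXρ i j - e1 * hXρ (i + 1) j - e2 * hXρ i (j + 1) -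
      e3 * hXρ (i + 2) j - e4 * hXρ (i + 1) (j + 1)
  · by_cases h : i + j ≤ 2
    · simp (disch := omega) only [recursiveExtension_of_le]
      exact hY i j h
    · rw [recursiveExtension, dif_neg (by omega), dif_neg hi]
      rfl

end

def MomentIdx.castLE {m n : ℕ} (h : m ≤ n) (p : MomentIdx m) : MomentIdx n := ⟨p.1, p.2.trans h⟩

section MomentMatrix

variable {n : ℕ} {β : ℕ × ℕ → ℝ}

theorem isHermitian_momentMatrix : (momentMatrix n β).IsHermitian := by
  ext p q
  simp [momentMatrix, add_comm]

theorem momentMatrix_submatrix_castLE {m : ℕ} (h : m ≤ n) :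
    (momentMatrix n β).submatrix (MomentIdx.castLE h) (MomentIdx.castLE h) = momentMatrix m β :=
  rfl

theorem momentMatrix_congr {β' : ℕ × ℕ → ℝ} (h : ∀ p : ℕ × ℕ, p.1 + p.2 ≤ 2 * n → β' p = β p) :
    momentMatrix n β' = momentMatrix n β := by
  ext p q
  have := p.2
  have := q.2
  exact h _ (by dsimp only; omega)

def momentCol (n : ℕ) (β : ℕ × ℕ → ℝ) (q : ℕ × ℕ) : MomentIdx n → ℝ :=
  fun p => β (p.1.1 + q.1, p.1.2 + q.2)

theorem col_momentMatrix (q : MomentIdx n) : (momentMatrix n β).col q = momentCol n β q.1 :=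
  rfl

theorem momentCol_add_two_fst {a b c : ℝ} {d i j : ℕ} (hX : HasXSqRelation β a b c d)
    (h : n + i + j ≤ d) :
    momentCol n β (i + 2, j) =
      a • momentCol n β (i, j) + b • momentCol n β (i + 1, j) + c • momentCol n β (i, j + 1) := by
  funext p
  have := p.2
  simpa [momentCol, add_assoc] using hX (p.1.1 + i) (p.1.2 + j) (by omega)

theorem momentCol_add_two_snd {e0 e1 e2 e3 e4 : ℝ} {d i j : ℕ}
    (hY : HasYSqRelation β e0 e1 e2 e3 e4 d) (h : n + i + j ≤ d) :
    momentCol n β (i, j + 2) =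
      e0 • momentCol n β (i, j) + e1 • momentCol n β (i + 1, j) + e2 • momentCol n β (i, j + 1) +
        e3 • momentCol n β (i + 2, j) + e4 • momentCol n β (i + 1, j + 1) := by
  funext p
  have := p.2
  simpa [momentCol, add_assoc] using hY (p.1.1 + i) (p.1.2 + j) (by omega)

theorem col_momentMatrix_three_mem_span {a b c e0 e1 e2 e3 e4 : ℝ}
    (hX : HasXSqRelation β a b c 4) (hY : HasYSqRelation β e0 e1 e2 e3 e4 4) (q : MomentIdx 3) :
    (momentMatrix 3 β).col q ∈
      span ℝ (range ((momentMatrix 3 β).col ∘ MomentIdx.castLE (show 2 ≤ 3 by norm_num))) := by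
  set S := span ℝ (range ((momentMatrix 3 β).col ∘ MomentIdx.castLE (show 2 ≤ 3 by norm_num)))
  have low : ∀ i j, i + j ≤ 2 → momentCol 3 β (i, j) ∈ S :=
    fun i j h => subset_span ⟨⟨(i, j), h⟩, rfl⟩
  have h30 : momentCol 3 β (3, 0) ∈ S := by
    rw [momentCol_add_two_fst hX le_rfl]
    exact add_mem (add_mem (smul_mem _ _ (low 1 0 (by norm_num)))
      (smul_mem _ _ (low 2 0 le_rfl))) (smul_mem _ _ (low 1 1 le_rfl))
  have h21 : momentCol 3 β (2, 1) ∈ S := by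
    rw [momentCol_add_two_fst hX le_rfl]
    exact add_mem (add_mem (smul_mem _ _ (low 0 1 (by norm_num)))
      (smul_mem _ _ (low 1 1 le_rfl))) (smul_mem _ _ (low 0 2 le_rfl))
  have h12 : momentCol 3 β (1, 2) ∈ S := by
    rw [momentCol_add_two_snd hY le_rfl]
    exact add_mem (add_mem (add_mem (add_mem (smul_mem _ _ (low 1 0 (by norm_num)))
      (smul_mem _ _ (low 2 0 le_rfl))) (smul_mem _ _ (low 1 1 le_rfl)))
      (smul_mem _ _ h30)) (smul_mem _ _ h21)
  have h03 : momentCol 3 β (0, 3) ∈ S := by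
    rw [momentCol_add_two_snd hY le_rfl]
    exact add_mem (add_mem (add_mem (add_mem (smul_mem _ _ (low 0 1 (by norm_num)))
      (smul_mem _ _ (low 1 1 le_rfl))) (smul_mem _ _ (low 0 2 le_rfl)))
      (smul_mem _ _ h21)) (smul_mem _ _ h12)
  rw [col_momentMatrix]
  obtain ⟨⟨i, j⟩, hq⟩ := q
  rcases (show i + j ≤ 2 ∨ i + j = 3 by dsimp only at hq; omega) with h | h
  · exact low i j h
  · obtain rfl : j = 3 - i := by omega
    have : i ≤ 3 := by omega
    interval_cases i <;> assumption

end MomentMatrix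

/-- Lemma 2.5: a positive semidefinite, recursively determined `M(2)` (the column
`X²` is a combination of `1, X, Y` and the column `Y²` is a combination of
`1, X, Y, X², XY`) admits a flat positive semidefinite extension `M(3)`. -/
theorem recursively_determined_flat_extension (β : ℕ × ℕ → ℝ)
    (hpsd : (momentMatrix 2 β).PosSemidef)
    (hX2 : ∃ a b c : ℝ, ∀ p : MomentIdx 2,
      momentMatrix 2 β p ⟨(2, 0), by omega⟩ =
        a * momentMatrix 2 β p ⟨(0, 0), by omega⟩ +
        b * momentMatrix 2 β p ⟨(1, 0), by omega⟩ +
        c * momentMatrix 2 β p ⟨(0, 1), by omega⟩)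
    (hY2 : ∃ e0 e1 e2 e3 e4 : ℝ, ∀ p : MomentIdx 2,
      momentMatrix 2 β p ⟨(0, 2), by omega⟩ =
        e0 * momentMatrix 2 β p ⟨(0, 0), by omega⟩ +
        e1 * momentMatrix 2 β p ⟨(1, 0), by omega⟩ +
        e2 * momentMatrix 2 β p ⟨(0, 1), by omega⟩ +
        e3 * momentMatrix 2 β p ⟨(2, 0), by omega⟩ +
        e4 * momentMatrix 2 β p ⟨(1, 1), by omega⟩) :
    ∃ β' : ℕ × ℕ → ℝ, (∀ p : ℕ × ℕ, p.1 + p.2 ≤ 4 → β' p = β p) ∧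
      (momentMatrix 3 β').PosSemidef ∧
      (momentMatrix 3 β').rank = (momentMatrix 2 β).rank := by
  obtain ⟨a, b, c, hX⟩ := hX2
  obtain ⟨e0, e1, e2, e3, e4, hY⟩ := hY2
  have hXβ : HasXSqRelation β a b c 2 := fun i j h => by
    simpa [momentMatrix] using hX ⟨(i, j), h⟩
  have hYβ : HasYSqRelation β e0 e1 e2 e3 e4 2 := fun i j h => by
    simpa [momentMatrix] using hY ⟨(i, j), h⟩
  set β' := recursiveExtension β a b c e0 e1 e2 e3 e4
  have hagree : ∀ p : ℕ × ℕ, p.1 + p.2 ≤ 4 → β' p = β p := fun _ => recursiveExtension_of_le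
  have hspan := col_momentMatrix_three_mem_span
    (fun i j _ => recursiveExtension_add_two_fst hXβ i j)
    (fun i j _ => recursiveExtension_add_two_snd hXβ hYβ i j)
  have hsub : (momentMatrix 3 β').submatrix (MomentIdx.castLE (show 2 ≤ 3 by norm_num))
      (MomentIdx.castLE (show 2 ≤ 3 by norm_num)) = momentMatrix 2 β :=
    (momentMatrix_submatrix_castLE _).trans (momentMatrix_congr hagree)
  refine ⟨β', hagree, isHermitian_momentMatrix.posSemidef_of_col_mem_span hspan (hsub ▸ hpsd), ?_⟩
  rw [isHermitian_momentMatrix.rank_eq_rank_submatrix_of_col_mem_span hspan, hsub]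
end

section
/- Let n, r ∈ ℕ, let (x_1,y_1), …, (x_r,y_r) ∈ ℝ² be pairwise distinct points with strictly positive weights ρ_1, …, ρ_r, and define β : ℕ × ℕ → ℝ by β(i, j) = Σ_{k=1}^{r} ρ_k x_k^i y_k^j. Let a be a real vector indexed by the pairs (i,j) with i+j ≤ n, regarded as the coefficient vector of the polynomial P(u,v) = Σ_{i+j ≤ n} a_{(i,j)} u^i v^j. Then M(n)·a = 0 (where M(n) is the moment matrix of order n of β) if and only if P(x_k, y_k) = 0 for every k = 1, …, r. -/
open Matrix

/-- Proposition 3.1 (Curto–Fialkow): for the moment matrix of a finitely atomic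
measure, a coefficient vector `a` is in the kernel of `M(n)` iff the corresponding
polynomial `P(u,v) = Σ_{i+j≤n} a_{(i,j)} uⁱ vʲ` vanishes at every atom. -/
theorem momentMatrix_kernel_iff_vanishing (n r : ℕ)
    (pt : Fin r → ℝ × ℝ) (hpt : Function.Injective pt)
    (ρ : Fin r → ℝ) (hρ : ∀ k, 0 < ρ k)
    (a : MomentIdx n → ℝ) :
    momentMatrix n (fun p => ∑ k, ρ k * (pt k).1 ^ p.1 * (pt k).2 ^ p.2) *ᵥ a = 0 ↔
      ∀ k : Fin r,
        ∑ q : MomentIdx n, a q * (pt k).1 ^ q.1.1 * (pt k).2 ^ q.1.2 = 0 := by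
  set P : Fin r → ℝ := fun k => ∑ q : MomentIdx n, a q * (pt k).1 ^ q.1.1 * (pt k).2 ^ q.1.2 with hP
  have key : ∀ p : MomentIdx n,
      (momentMatrix n (fun p => ∑ k, ρ k * (pt k).1 ^ p.1 * (pt k).2 ^ p.2) *ᵥ a) p
        = ∑ k, ρ k * (pt k).1 ^ p.1.1 * (pt k).2 ^ p.1.2 * P k := by
    intro p
    simp only [mulVec, dotProduct, momentMatrix, Finset.sum_mul]
    rw [Finset.sum_comm]
    refine Finset.sum_congr rfl fun k _ => ?_
    rw [hP, Finset.mul_sum]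
    refine Finset.sum_congr rfl fun q _ => ?_
    rw [pow_add, pow_add]
    ring
  constructor
  · intro h k
    have h0 : ∑ k, ρ k * P k ^ 2 = 0 := by
      have e : ∑ p : MomentIdx n,
          a p * (momentMatrix n (fun p => ∑ k, ρ k * (pt k).1 ^ p.1 * (pt k).2 ^ p.2) *ᵥ a) p
            = ∑ k, ρ k * P k ^ 2 := by
        simp only [key, Finset.mul_sum]
        rw [Finset.sum_comm]
        refine Finset.sum_congr rfl fun k _ => ?_
        have : ∑ p : MomentIdx n, a p * (ρ k * (pt k).1 ^ p.1.1 * (pt k).2 ^ p.1.2 * P k)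
            = (∑ p : MomentIdx n, a p * (pt k).1 ^ p.1.1 * (pt k).2 ^ p.1.2) * (ρ k * P k) := by
          rw [Finset.sum_mul]
          exact Finset.sum_congr rfl fun p _ => by ring
        have hPk : ∑ p : MomentIdx n, a p * (pt k).1 ^ p.1.1 * (pt k).2 ^ p.1.2 = P k := rfl
        rw [this, hPk]
        ring
      rw [← e, h]
      simp
    have hnn : ∀ k ∈ Finset.univ, (0:ℝ) ≤ ρ k * P k ^ 2 :=
      fun k _ => mul_nonneg (hρ k).le (sq_nonneg _)
    have := (Finset.sum_eq_zero_iff_of_nonneg hnn).mp h0 k (Finset.mem_univ k)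
    have h2 : P k ^ 2 = 0 := by
      rcases mul_eq_zero.mp this with h' | h'
      · exact absurd h' (hρ k).ne'
      · exact h'
    exact (pow_eq_zero_iff two_ne_zero).mp h2
  · intro h
    funext p
    rw [key p, Pi.zero_apply]
    refine Finset.sum_eq_zero fun k _ => ?_
    have hk : P k = 0 := h k
    rw [hk, mul_zero]
end
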